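/- arXiv:2512.10828 — 5 statements merged into one kernel-verified Lean document; each statement's English description precedes it below -/
import Mathlib

section
/- Let g : [0,1] → ℝ be piecewise continuous and strictly monotonic, W ~ Uniform(0,1), and let F_g denote the distribution function of g(W). Then the composite map T_g = F_g ∘ g is uniform-distribution preserving: if U ~ Uniform(0,1) then T_g(U) ~ Uniform(0,1). -/
open MeasureTheory Set

noncomputable section

/-- The uniform distribution on `[0,1]`. -/
def unif : Measure ℝ := volume.restrict (Icc (0:ℝ) 1)

/-- The distribution function of `g(W)` for `W ~ Uniform(0,1)`. -/
def distFun (g : ℝ → ℝ) (x : ℝ) : ℝ := (unif {w | g w ≤ x}).toReal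

/-- `g` is piecewise continuous and strictly monotonic on a finite partition of `[0,1]`. -/
def PiecewiseContStrictMono (g : ℝ → ℝ) : Prop :=
  ∃ (M : ℕ) (u : ℕ → ℝ), 0 < M ∧ u 0 = 0 ∧ u M = 1 ∧
    (∀ m < M, u m < u (m+1)) ∧
    ∀ m < M, ContinuousOn g (Ioo (u m) (u (m+1))) ∧
      (StrictMonoOn g (Ioo (u m) (u (m+1))) ∨ StrictAntiOn g (Ioo (u m) (u (m+1))))

open ProbabilityTheory in
lemma aux_unif_prob : IsProbabilityMeasure unif := by
  constructor
  rw [unif, Measure.restrict_apply MeasurableSet.univ, Set.univ_inter, Real.volume_Icc]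
  norm_num

lemma aux_unif_Iic (t : ℝ) : unif (Iic t) = ENNReal.ofReal (min t 1) := by
  rw [unif, Measure.restrict_apply measurableSet_Iic]
  rcases le_total t 1 with h1 | h1
  · have : Iic t ∩ Icc (0:ℝ) 1 = Icc 0 t := by
      ext x
      simp only [mem_inter_iff, mem_Iic, mem_Icc]
      constructor
      · rintro ⟨hx, hx0, _⟩; exact ⟨hx0, hx⟩
      · rintro ⟨hx0, hx⟩; exact ⟨hx, hx0, hx.trans h1⟩
    rw [this, Real.volume_Icc, min_eq_left h1, sub_zero]
  · have : Iic t ∩ Icc (0:ℝ) 1 = Icc 0 1 := by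
      ext x
      simp only [mem_inter_iff, mem_Iic, mem_Icc]
      constructor
      · rintro ⟨hx, h⟩; exact h
      · rintro ⟨hx0, hx1⟩; exact ⟨hx1.trans h1, hx0, hx1⟩
    rw [this, Real.volume_Icc, min_eq_right h1, sub_zero]

open ProbabilityTheory in
/-- The probability integral transform: for an atomless probability measure on `ℝ`,
pushing forward by the cdf gives the uniform distribution on `[0,1]`. -/
lemma aux_map_cdf (ν : Measure ℝ) [IsProbabilityMeasure ν] [NullSingletonClass ν] :
    Measure.map (fun x => cdf ν x) ν = unif := by
  have hmono : Monotone (fun x => cdf ν x) := monotone_cdf ν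
  have hF_meas : Measurable (fun x => cdf ν x) := hmono.measurable
  -- continuity of the cdf
  have hleft : ∀ x, Function.leftLim (fun y => cdf ν y) x = cdf ν x := by
    intro x
    have h0 : ν {x} = 0 := measure_singleton x
    rw [← measure_cdf ν, (cdf ν).measure_singleton] at h0
    have h1 : cdf ν x - Function.leftLim (cdf ν) x ≤ 0 := by
      by_contra h
      push_neg at h
      rw [ENNReal.ofReal_eq_zero] at h0
      linarith
    have h2 : Function.leftLim (fun y => cdf ν y) x ≤ cdf ν x :=
      hmono.leftLim_le le_rfl
    have : Function.leftLim (fun y => cdf ν y) x = Function.leftLim (cdf ν) x := rfl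
    rw [this] at h2 ⊢
    linarith
  have hcont : Continuous (fun x => cdf ν x) := by
    rw [continuous_iff_continuousAt]
    intro x
    rw [hmono.continuousAt_iff_leftLim_eq_rightLim, hleft x]
    exact ((cdf ν).rightLim_eq x).symm
  haveI := aux_unif_prob
  refine Measure.ext_of_Iic _ _ (fun t => ?_)
  rw [Measure.map_apply hF_meas measurableSet_Iic, aux_unif_Iic]
  have hpre : (fun x => cdf ν x) ⁻¹' Iic t = {y | cdf ν y ≤ t} := rfl
  rw [hpre]
  rcases lt_or_ge t 0 with ht0 | ht0
  · have he : {y | cdf ν y ≤ t} = ∅ := by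
      ext y; simp only [mem_setOf_eq, mem_empty_iff_false, iff_false, not_le]
      exact lt_of_lt_of_le ht0 (cdf_nonneg ν y)
    rw [he, measure_empty, min_eq_left (by linarith), ENNReal.ofReal_of_nonpos ht0.le]
  rcases le_or_gt 1 t with ht1 | ht1
  · have he : {y | cdf ν y ≤ t} = univ := by
      ext y; simp only [mem_setOf_eq, mem_univ, iff_true]
      exact (cdf_le_one ν y).trans ht1
    rw [he, measure_univ, min_eq_right ht1, ENNReal.ofReal_one]
  · -- 0 ≤ t < 1
    rw [min_eq_left ht1.le]
    set S := {y | cdf ν y ≤ t} with hS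
    rcases eq_empty_or_nonempty S with hSe | hSne
    · -- then t ≤ 0, so t = 0
      have hlow : ∀ y, t ≤ cdf ν y := by
        intro y
        by_contra h
        push_neg at h
        exact (eq_empty_iff_forall_notMem.1 hSe) y h.le
      have ht : t ≤ 0 :=
        ge_of_tendsto (tendsto_cdf_atBot ν) (Filter.Eventually.of_forall hlow)
      have : t = 0 := le_antisymm ht ht0
      rw [hSe, measure_empty, this, ENNReal.ofReal_zero]
    · -- S is nonempty, bounded above, closed
      obtain ⟨b, hb⟩ : ∃ b, t < cdf ν b := by
        have := tendsto_cdf_atTop ν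
        have h' : ∀ᶠ y in Filter.atTop, t < cdf ν y :=
          this.eventually (eventually_gt_nhds ht1)
        exact h'.exists
      have hbdd : BddAbove S := by
        refine ⟨b, fun y hy => ?_⟩
        by_contra h
        push_neg at h
        exact absurd (le_trans (hmono h.le) hy) (not_le.2 hb)
      have hclosed : IsClosed S := isClosed_le hcont continuous_const
      set a := sSup S with ha
      have haS : a ∈ S := hclosed.csSup_mem hSne hbdd
      have hSIic : S = Iic a := by
        apply Subset.antisymm
        · exact fun y hy => le_csSup hbdd hy
        · exact fun y hy => le_trans (hmono hy) haS
      -- cdf ν a = t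
      have hat : cdf ν a = t := by
        refine le_antisymm haS ?_
        by_contra h
        push_neg at h
        have hev : ∀ᶠ y in nhdsWithin a (Ioi a), cdf ν y < t :=
          ((hcont.continuousAt).eventually (eventually_lt_nhds h)).filter_mono
            nhdsWithin_le_nhds
        obtain ⟨y, hy1, hy2⟩ := (eventually_mem_nhdsWithin.and hev).exists
        have : y ≤ a := le_csSup hbdd hy2.le
        exact absurd hy1 (not_lt.2 this)
      rw [hSIic, ← ofReal_cdf ν a, hat]

/-- If `g` is piecewise continuous and strictly monotonic, then `T_g = F_g ∘ g` is
uniform-distribution preserving: `T_g(U) ~ Uniform(0,1)` for `U ~ Uniform(0,1)`. -/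
theorem stmt2 (g : ℝ → ℝ) (hmeas : Measurable g)
    (hpw : PiecewiseContStrictMono g) :
    Measure.map (fun u => distFun g (g u)) unif = unif := by
  haveI := aux_unif_prob
  set ν := Measure.map g unif with hν
  haveI : IsProbabilityMeasure ν := Measure.isProbabilityMeasure_map hmeas.aemeasurable
  haveI : NullSingletonClass ν := by
    constructor
    intro c
    rw [hν, Measure.map_apply hmeas (measurableSet_singleton c), unif,
      Measure.restrict_apply (hmeas (measurableSet_singleton c))]
    obtain ⟨M, u, hM, hu0, huM, hstep, hpieces⟩ := hpw
    have hsub : ∀ m < M, (g ⁻¹' {c} ∩ Ioo (u m) (u (m+1))).Subsingleton := by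
      intro m hm x hx y hy
      simp only [mem_inter_iff, mem_preimage, mem_singleton_iff] at hx hy
      by_contra hne
      rcases (hpieces m hm).2 with hmon | hant
      · rcases lt_or_gt_of_ne hne with h | h
        · have := hmon hx.2 hy.2 h
          rw [hx.1, hy.1] at this; exact lt_irrefl _ this
        · have := hmon hy.2 hx.2 h
          rw [hx.1, hy.1] at this; exact lt_irrefl _ this
      · rcases lt_or_gt_of_ne hne with h | h
        · have := hant hx.2 hy.2 h
          rw [hx.1, hy.1] at this; exact lt_irrefl _ this
        · have := hant hy.2 hx.2 h
          rw [hx.1, hy.1] at this; exact lt_irrefl _ this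
    have hcov : g ⁻¹' {c} ∩ Icc 0 1 ⊆
        (u '' Iic M) ∪ ⋃ m ∈ Iio (M : ℕ), (g ⁻¹' {c} ∩ Ioo (u m) (u (m+1))) := by
      intro x hx
      by_cases hxim : x ∈ u '' Iic M
      · exact Or.inl hxim
      · refine Or.inr ?_
        have hne : ∀ n ≤ M, x ≠ u n := by
          intro n hn he
          exact hxim ⟨n, hn, he.symm⟩
        have hx1 : x < u M := lt_of_le_of_ne (huM ▸ hx.2.2) (hne M le_rfl)
        have key : ∀ n, n ≤ M → x < u n → ∃ m < M, u m < x ∧ x < u (m+1) := by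
          intro n
          induction n with
          | zero => intro _ hlt; rw [hu0] at hlt; exact absurd hx.2.1 (not_le.2 hlt)
          | succ k ih =>
            intro hk hlt
            rcases lt_or_ge (u k) x with h | h
            · exact ⟨k, by omega, h, hlt⟩
            · have : x < u k := lt_of_le_of_ne h (hne k (by omega))
              exact ih (by omega) this
        obtain ⟨m, hm, h1, h2⟩ := key M le_rfl hx1
        exact mem_biUnion hm ⟨hx.1, h1, h2⟩
    have hcnt : ((u '' Iic M) ∪
        ⋃ m ∈ Iio (M : ℕ), (g ⁻¹' {c} ∩ Ioo (u m) (u (m+1)))).Countable :=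
      Set.Countable.union ((Set.to_countable _).image u)
        (Set.Countable.biUnion (Set.to_countable _) fun m hm => (hsub m hm).countable)
    exact measure_mono_null hcov (hcnt.measure_zero _)
  have hdF : ∀ x, distFun g x = ProbabilityTheory.cdf ν x := by
    intro x
    rw [distFun, ProbabilityTheory.cdf_eq_real, measureReal_def, hν,
      Measure.map_apply hmeas measurableSet_Iic]
    rfl
  have hfe : (fun u => distFun g (g u)) = (fun x => ProbabilityTheory.cdf ν x) ∘ g :=
    funext fun u => hdF (g u)
  rw [hfe, ← Measure.map_map (ProbabilityTheory.monotone_cdf ν).measurable hmeas, ← hν,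
    aux_map_cdf]

end
end

section
/- Let T : [0,1] → [0,1] be uniform-distribution preserving and continuously differentiable on an open interval (a,b) ⊂ [0,1]. Then T′(x) ≠ 0 for all x ∈ (a,b), and T is strictly monotone on (a,b). -/
/-!
If `|T'| ≤ C < 1` on a ball `B` of radius `r` inside `[0,1]`, the mean value theorem puts `T(B)`
inside a ball `J` of radius `C r`. Preservation of the uniform distribution gives
`2r = λ(B) ≤ λ(T⁻¹ J) = λ(J) ≤ 2 C r`, which is absurd; hence `|T'| ≥ 1` wherever `T'` is
continuous. A derivative that never vanishes on an interval has constant sign by Darboux's theorem,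
so `T` is strictly monotone there.
-/

open MeasureTheory Set Metric Filter Topology

noncomputable section

/-- `T` is uniform-distribution preserving: `T(U) ~ Uniform(0,1)` for `U ~ Uniform(0,1)`. -/
def UDP (T : ℝ → ℝ) : Prop := Measure.map T unif = unif

theorem UDP.volume_le_of_mapsTo {T : ℝ → ℝ} (hT : UDP T) (hmeas : Measurable T) {s J : Set ℝ}
    (hs : s ⊆ Icc 0 1) (hJ : MeasurableSet J) (hsJ : MapsTo T s J) : volume s ≤ volume J :=
  calc volume s = unif s := (Measure.restrict_eq_self _ hs).symm
    _ ≤ unif (T ⁻¹' J) := measure_mono hsJ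
    _ = unif J := by rw [← Measure.map_apply hmeas hJ, hT]
    _ ≤ volume J := Measure.restrict_apply_le _ _

theorem mapsTo_closedBall_of_norm_hasDerivAt_le {f f' : ℝ → ℝ} {x r C : ℝ}
    (hf : ∀ y ∈ closedBall x r, HasDerivAt f (f' y) y)
    (hC : ∀ y ∈ closedBall x r, ‖f' y‖ ≤ C) :
    MapsTo f (closedBall x r) (closedBall (f x) (C * r)) := by
  intro y hy
  have hx : x ∈ closedBall x r := mem_closedBall_self (nonempty_closedBall.mp ⟨y, hy⟩)
  have hC₀ : 0 ≤ C := (norm_nonneg _).trans (hC x hx)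
  calc dist (f y) (f x) ≤ C * ‖y - x‖ :=
        (convex_closedBall x r).norm_image_sub_le_of_norm_hasDerivWithin_le
          (fun z hz => (hf z hz).hasDerivWithinAt) hC hx hy
    _ ≤ C * r := mul_le_mul_of_nonneg_left (mem_closedBall.mp hy) hC₀

theorem UDP.one_le_abs_of_hasDerivAt {T T' : ℝ → ℝ} (hT : UDP T) (hmeas : Measurable T) {x : ℝ}
    (hx : Icc 0 1 ∈ 𝓝 x) (hderiv : ∀ᶠ y in 𝓝 x, HasDerivAt T (T' y) y)
    (hcont : ContinuousAt T' x) : 1 ≤ |T' x| := by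
  by_contra! hlt
  obtain ⟨C, hxC, hC1⟩ := exists_between hlt
  have hC : ∀ᶠ y in 𝓝 x, ‖T' y‖ < C := hcont.norm.eventually (gt_mem_nhds hxC)
  have hx' : ∀ᶠ y in 𝓝 x, y ∈ Icc (0:ℝ) 1 := hx
  obtain ⟨r, hr, hball⟩ := nhds_basis_closedBall.eventually_iff.mp (hx'.and (hderiv.and hC))
  have hvol := hT.volume_le_of_mapsTo hmeas (fun y hy => (hball hy).1) measurableSet_closedBall
    (mapsTo_closedBall_of_norm_hasDerivAt_le (fun y hy => (hball hy).2.1)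
      (fun y hy => (hball hy).2.2.le))
  rw [Real.volume_closedBall, Real.volume_closedBall,
    ENNReal.ofReal_le_ofReal_iff'] at hvol
  rcases hvol with h | h <;> nlinarith

theorem strictMonoOn_or_strictAntiOn_of_hasDerivAt_ne_zero {f f' : ℝ → ℝ} {s : Set ℝ}
    (hs : Convex ℝ s) (hf : ∀ x ∈ s, HasDerivAt f (f' x) x) (hf' : ∀ x ∈ s, f' x ≠ 0) :
    StrictMonoOn f s ∨ StrictAntiOn f s := by
  have hcont : ContinuousOn f s := fun x hx => (hf x hx).continuousAt.continuousWithinAt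
  have hf_int : ∀ x ∈ interior s, HasDerivWithinAt f (f' x) (interior s) x :=
    fun x hx => (hf x (interior_subset hx)).hasDerivWithinAt
  rcases hasDerivWithinAt_forall_lt_or_forall_gt_of_forall_ne hs
    (fun x hx => (hf x hx).hasDerivWithinAt) hf' with hneg | hpos
  · exact .inr <| strictAntiOn_of_hasDerivWithinAt_neg hs hcont hf_int
      fun x hx => hneg x (interior_subset hx)
  · exact .inl <| strictMonoOn_of_hasDerivWithinAt_pos hs hcont hf_int
      fun x hx => hpos x (interior_subset hx)

theorem stmt4_general (T T' : ℝ → ℝ) (hmeas : Measurable T)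
    (hudp : UDP T)
    (a b : ℝ) (hsub : Ioo a b ⊆ Icc (0:ℝ) 1)
    (hderiv : ∀ x ∈ Ioo a b, HasDerivAt T (T' x) x)
    (hcont : ContinuousOn T' (Ioo a b)) :
    (∀ x ∈ Ioo a b, T' x ≠ 0) ∧
      (StrictMonoOn T (Ioo a b) ∨ StrictAntiOn T (Ioo a b)) := by
  have hne : ∀ x ∈ Ioo a b, T' x ≠ 0 := by
    intro x hx h0
    have hnhds : Ioo a b ∈ 𝓝 x := Ioo_mem_nhds hx.1 hx.2
    have := hudp.one_le_abs_of_hasDerivAt hmeas (mem_of_superset hnhds hsub)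
      (eventually_of_mem hnhds hderiv) (hcont.continuousAt hnhds)
    norm_num [h0] at this
  exact ⟨hne, strictMonoOn_or_strictAntiOn_of_hasDerivAt_ne_zero (convex_Ioo a b) hderiv hne⟩

/-- If a udp transformation `T` is continuously differentiable on `(a,b) ⊆ [0,1]` (with
derivative `T'`), then `T' ≠ 0` on `(a,b)` and `T` is strictly monotone on `(a,b)`. -/
theorem stmt4 (T T' : ℝ → ℝ) (hmeas : Measurable T)
    (hmaps : MapsTo T (Icc (0:ℝ) 1) (Icc (0:ℝ) 1)) (hudp : UDP T)
    (a b : ℝ) (hab : a < b) (hsub : Ioo a b ⊆ Icc (0:ℝ) 1)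
    (hderiv : ∀ x ∈ Ioo a b, HasDerivAt T (T' x) x)
    (hcont : ContinuousOn T' (Ioo a b)) :
    (∀ x ∈ Ioo a b, T' x ≠ 0) ∧
      (StrictMonoOn T (Ioo a b) ∨ StrictAntiOn T (Ioo a b)) :=
  stmt4_general T T' hmeas hudp a b hsub hderiv hcont

end
end

section
/- Let T be a regular udp transformation, let V and Z be independent random variables each uniform on (0,1), and define the stochastic inverse T⁻(V,Z) = G_V^{-1}(Z), where for x ∈ T(A), G_x is the distribution function of the discrete random variable supported on the finite preimage {u ∈ A : T(u) = x} with probabilities 1/|T′(r_i(x))|, and G_x^{-1} denotes its generalized inverse (and T⁻(x,z) := 0 for x ∉ T(A)). Then T⁻(V,Z) is uniformly distributed on (0,1). -/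
open MeasureTheory Set

noncomputable section

/-- `G_x(t)`: the distribution function of the discrete random variable supported on the
preimage `{u ∈ A : T(u) = x}` with probabilities `1/|T'(u)|`. -/
def Gfun (T T' : ℝ → ℝ) (A : Set ℝ) (x t : ℝ) : ℝ :=
  ∑' u : {u : ℝ | u ∈ A ∧ T u = x ∧ u ≤ t}, 1 / |T' (u : ℝ)|

open Classical in
/-- The stochastic inverse `T⁻(x,z) = G_x⁻¹(z)` (generalized inverse) for `x ∈ T(A)`,
and `0` otherwise. -/
def stochInv (T T' : ℝ → ℝ) (A : Set ℝ) (x z : ℝ) : ℝ :=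
  if x ∈ T '' A then sInf {t : ℝ | z ≤ Gfun T T' A x t} else 0

instance : IsProbabilityMeasure unif := by
  constructor
  rw [unif, Measure.restrict_apply_univ, Real.volume_Icc]
  norm_num

namespace Stmt8Aux

open Filter ENNReal Function

lemma unif_def : unif = volume.restrict (Icc (0:ℝ) 1) := rfl

lemma measurable_indicator_of_continuousOn {f : ℝ → ℝ} {s : Set ℝ} (hs : MeasurableSet s)
    (hf : ContinuousOn f s) : Measurable (s.indicator f) := by
  have h1 : Measurable (s.restrict f) :=
    (continuousOn_iff_continuous_restrict.mp hf).measurable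
  have h2 := (MeasurableEmbedding.subtype_coe hs).measurable_extend h1
    (measurable_const (a := (0:ℝ)))
  convert h2 using 1
  funext x
  by_cases hx : x ∈ s
  · rw [indicator_of_mem hx]
    have : x = Subtype.val (⟨x, hx⟩ : s) := rfl
    rw [this, Injective.extend_apply Subtype.val_injective]
    rfl
  · rw [indicator_of_notMem hx, Function.extend_apply']
    rintro ⟨a, rfl⟩
    exact hx a.2

/-- decoded triple -/
def dz (n : ℕ) : ℕ × ℚ × ℚ := (Encodable.decode n).getD (0, 0, 0)

def rq (n : ℕ) : ℝ := ((dz n).2.1 : ℝ)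
def sq (n : ℕ) : ℝ := ((dz n).2.2 : ℝ)
def lq (n : ℕ) : ℕ := (dz n).1

section

variable (T T' : ℝ → ℝ) (L : ℕ) (a : ℕ → ℝ) (A : Set ℝ)

/-- bundled hypotheses -/
structure Ctx : Prop where
  hmeas : Measurable T
  hmaps : MapsTo T (Icc (0:ℝ) 1) (Icc (0:ℝ) 1)
  hudp : UDP T
  hL : 0 < L
  ha0 : a 0 = 0
  haL : a L = 1
  hmono : ∀ ℓ < L, a ℓ < a (ℓ+1)
  hA : A = ⋃ ℓ ∈ Finset.range L, Ioo (a ℓ) (a (ℓ+1))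
  hderiv : ∀ x ∈ A, HasDerivAt T (T' x) x
  hcont : ∀ ℓ < L, ContinuousOn T' (Ioo (a ℓ) (a (ℓ+1)))

def posOn (n : ℕ) : Prop := ∀ u ∈ Ioo (rq n) (sq n), 0 < T' u
def negOn (n : ℕ) : Prop := ∀ u ∈ Ioo (rq n) (sq n), T' u < 0

def Ppred (n : ℕ) : Prop :=
  lq n < L ∧ Ioo (rq n) (sq n) ⊆ Ioo (a (lq n)) (a (lq n + 1)) ∧
    (posOn T' n ∨ negOn T' n)

open Classical in
def Qp (n : ℕ) : Set ℝ := if Ppred T' L a n then Ioo (rq n) (sq n) else ∅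

def Ep (n : ℕ) : Set ℝ := disjointed (Qp T' L a) n

open Classical in
def phi (n : ℕ) (x : ℝ) : ℝ :=
  if posOn T' n then sSup {u | u ∈ Ioo (rq n) (sq n) ∧ T u ≤ x}
  else sSup {u | u ∈ Ioo (rq n) (sq n) ∧ x ≤ T u}

def wfun (u : ℝ) : ℝ≥0∞ := ENNReal.ofReal (1 / |T' u|)

def Wn (n : ℕ) (u : ℝ) : ℝ≥0∞ :=
  ENNReal.ofReal (1 / |(Ioo (a (lq n)) (a (lq n + 1))).indicator T' u|)

def GE (x t : ℝ) : ℝ≥0∞ := ∑' u : {u : ℝ | u ∈ A ∧ T u = x ∧ u ≤ t}, wfun T' u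

def hfun (n : ℕ) (t : ℝ) (x : ℝ) : ℝ≥0∞ :=
  (T '' (Ep T' L a n ∩ Iic t)).indicator (fun y => Wn T' a n (phi T T' n y)) x

def GEm (t : ℝ) (x : ℝ) : ℝ≥0∞ := ∑' n : ℕ, hfun T T' L a n t x

end

section

variable {T T' : ℝ → ℝ} {L : ℕ} {a : ℕ → ℝ} {A : Set ℝ}

/-! ### basic facts -/

lemma amono (hc : Ctx T T' L a A) : ∀ j ≤ L, ∀ i ≤ j, a i ≤ a j := by
  intro j
  induction j with
  | zero => intro _ i hi; interval_cases i; exact le_refl _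
  | succ j ih =>
    intro hj i hi
    rcases Nat.eq_or_lt_of_le hi with h | h
    · exact h ▸ le_refl _
    · have hij : i ≤ j := Nat.lt_succ_iff.mp h
      exact (ih (le_trans (Nat.le_succ j) hj) i hij).trans
        (le_of_lt (hc.hmono j (by omega)))

lemma IooA (hc : Ctx T T' L a A) {ℓ : ℕ} (hℓ : ℓ < L) : Ioo (a ℓ) (a (ℓ+1)) ⊆ A := by
  rw [hc.hA]
  intro u hu
  simp only [Set.mem_iUnion, Finset.mem_range, exists_prop]
  exact ⟨ℓ, hℓ, hu⟩

lemma memA (hc : Ctx T T' L a A) {u : ℝ} (hu : u ∈ A) :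
    ∃ ℓ, ℓ < L ∧ u ∈ Ioo (a ℓ) (a (ℓ+1)) := by
  rw [hc.hA] at hu
  simp only [Set.mem_iUnion, Finset.mem_range, exists_prop] at hu
  exact hu

lemma A_subset (hc : Ctx T T' L a A) : A ⊆ Ioo (0:ℝ) 1 := by
  intro u hu
  obtain ⟨ℓ, hℓ, hu2⟩ := memA hc hu
  have h1 : a 0 ≤ a ℓ := amono hc ℓ (le_of_lt hℓ) 0 (Nat.zero_le _)
  have h2 : a (ℓ+1) ≤ a L := amono hc L (le_refl _) (ℓ+1) hℓ
  rw [hc.ha0] at h1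
  rw [hc.haL] at h2
  exact ⟨lt_of_le_of_lt h1 hu2.1, lt_of_lt_of_le hu2.2 h2⟩

lemma measA (hc : Ctx T T' L a A) : MeasurableSet A := by
  rw [hc.hA]
  exact MeasurableSet.biUnion (Finset.range L).countable_toSet
    (fun _ _ => measurableSet_Ioo)

lemma compl_A_null (hc : Ctx T T' L a A) : volume (Icc (0:ℝ) 1 \ A) = 0 := by
  classical
  have key : Icc (0:ℝ) 1 \ A ⊆ a '' {i | i ≤ L} := by
    rintro x ⟨hx, hxA⟩
    have h0 : a 0 ≤ x := by rw [hc.ha0]; exact hx.1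
    set m := Nat.findGreatest (fun i => a i ≤ x) L with hm
    have hPm : a m ≤ x := Nat.findGreatest_spec (P := fun i => a i ≤ x) (Nat.zero_le L) h0
    have hmL : m ≤ L := Nat.findGreatest_le L
    rcases eq_or_lt_of_le hmL with h | h
    · refine ⟨L, by simp, ?_⟩
      have hxL : x ≤ a L := by rw [hc.haL]; exact hx.2
      have : a L ≤ x := h ▸ hPm
      linarith
    · have hnot : ¬ a (m+1) ≤ x :=
        Nat.findGreatest_is_greatest (Nat.lt_succ_self m) h
      have hlt : x < a (m+1) := lt_of_not_ge hnot
      rcases eq_or_lt_of_le hPm with he | hlt2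
      · exact ⟨m, by simpa using le_of_lt h, he⟩
      · exact absurd (IooA hc h ⟨hlt2, hlt⟩) hxA
  exact measure_mono_null key
    (((Set.finite_Iic L).image a).countable.measure_zero volume)

lemma measSset (hc : Ctx T T' L a A) (x t : ℝ) :
    MeasurableSet {u : ℝ | u ∈ A ∧ T u = x ∧ u ≤ t} := by
  have : {u : ℝ | u ∈ A ∧ T u = x ∧ u ≤ t} = A ∩ T ⁻¹' {x} ∩ Iic t := by
    ext u; simp only [Set.mem_setOf_eq, Set.mem_inter_iff, Set.mem_preimage, Set.mem_singleton_iff, Set.mem_Iic, and_assoc]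
  rw [this]
  exact ((measA hc).inter (hc.hmeas (measurableSet_singleton x))).inter measurableSet_Iic

/-! ### pieces -/

lemma measQp (n : ℕ) : MeasurableSet (Qp T' L a n) := by
  classical
  by_cases h : Ppred T' L a n <;> simp [Qp, h, measurableSet_Ioo]

lemma measEp (n : ℕ) : MeasurableSet (Ep T' L a n) := by
  exact MeasurableSet.disjointed (fun i => measQp i) n

lemma Qp_subset_Ioo (n : ℕ) : Qp T' L a n ⊆ Ioo (rq n) (sq n) := by
  classical
  by_cases h : Ppred T' L a n <;> simp [Qp, h]

lemma Ep_subset_Qp (n : ℕ) : Ep T' L a n ⊆ Qp T' L a n := disjointed_subset _ _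

lemma Qp_eq_of_P {n : ℕ} (hP : Ppred T' L a n) : Qp T' L a n = Ioo (rq n) (sq n) := by
  simp [Qp, hP]

lemma Qp_eq_of_notP {n : ℕ} (hP : ¬ Ppred T' L a n) : Qp T' L a n = ∅ := by
  simp [Qp, hP]

lemma Qp_subset_A (hc : Ctx T T' L a A) (n : ℕ) : Qp T' L a n ⊆ A := by
  classical
  by_cases h : Ppred T' L a n
  · rw [Qp_eq_of_P h]
    exact h.2.1.trans (IooA hc h.1)
  · rw [Qp_eq_of_notP h]; exact empty_subset _

lemma Ep_subset_A (hc : Ctx T T' L a A) (n : ℕ) : Ep T' L a n ⊆ A :=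
  (Ep_subset_Qp n).trans (Qp_subset_A hc n)

lemma Qp_ne_zero (hc : Ctx T T' L a A) (n : ℕ) : ∀ u ∈ Qp T' L a n, T' u ≠ 0 := by
  classical
  by_cases h : Ppred T' L a n
  · rw [Qp_eq_of_P h]
    intro u hu
    rcases h.2.2 with hp | hn
    · exact ne_of_gt (hp u hu)
    · exact ne_of_lt (hn u hu)
  · rw [Qp_eq_of_notP h]; intro u hu; exact absurd hu (notMem_empty u)

lemma cover (hc : Ctx T T' L a A) {u : ℝ} (hu : u ∈ A) (hu' : T' u ≠ 0) :
    u ∈ ⋃ n, Ep T' L a n := by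
  classical
  obtain ⟨ℓ, hℓ, hu2⟩ := memA hc hu
  have hcontx : ContinuousAt T' u :=
    ((hc.hcont ℓ hℓ) u hu2).continuousAt (isOpen_Ioo.mem_nhds hu2)
  have hsign : {v : ℝ | 0 < T' v} ∈ nhds u ∨ {v : ℝ | T' v < 0} ∈ nhds u := by
    rcases lt_or_gt_of_ne hu' with hneg | hpos
    · exact Or.inr (hcontx.preimage_mem_nhds (Iio_mem_nhds hneg))
    · exact Or.inl (hcontx.preimage_mem_nhds (Ioi_mem_nhds hpos))
  have key : ∃ S : Set ℝ, S ∈ nhds u ∧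
      ((∀ v ∈ S, 0 < T' v) ∨ (∀ v ∈ S, T' v < 0)) := by
    rcases hsign with h | h
    · exact ⟨_, h, Or.inl (fun v hv => hv)⟩
    · exact ⟨_, h, Or.inr (fun v hv => hv)⟩
  obtain ⟨S, hS, hSsign⟩ := key
  have hmem : S ∩ Ioo (a ℓ) (a (ℓ+1)) ∈ nhds u :=
    Filter.inter_mem hS (isOpen_Ioo.mem_nhds hu2)
  obtain ⟨l, v, hulv, hsub⟩ := mem_nhds_iff_exists_Ioo_subset.mp hmem
  obtain ⟨r, hr1, hr2⟩ := exists_rat_btwn hulv.1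
  obtain ⟨s, hs1, hs2⟩ := exists_rat_btwn hulv.2
  set n := Encodable.encode (ℓ, r, s) with hn
  have hdz : dz n = (ℓ, r, s) := by
    simp [dz, hn, Encodable.encodek]
  have hrq : rq n = (r : ℝ) := by rw [rq, hdz]
  have hsq : sq n = (s : ℝ) := by rw [sq, hdz]
  have hlq : lq n = ℓ := by rw [lq, hdz]
  have hIoosub : Ioo (rq n) (sq n) ⊆ Ioo l v := by
    rw [hrq, hsq]
    exact Ioo_subset_Ioo (le_of_lt hr1) (le_of_lt hs2)
  have hP : Ppred T' L a n := by
    refine ⟨hlq ▸ hℓ, ?_, ?_⟩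
    · rw [hlq]
      exact hIoosub.trans (hsub.trans inter_subset_right)
    · rcases hSsign with h | h
      · exact Or.inl (fun w hw => h w (hsub (hIoosub hw)).1)
      · exact Or.inr (fun w hw => h w (hsub (hIoosub hw)).1)
  have humem : u ∈ Qp T' L a n := by
    rw [Qp_eq_of_P hP, hrq, hsq]
    exact ⟨hr2, hs1⟩
  have hUE : (⋃ m, Ep T' L a m) = ⋃ m, Qp T' L a m := iUnion_disjointed (f := Qp T' L a)
  rw [hUE]
  exact mem_iUnion.mpr ⟨n, humem⟩

lemma strictOn (hc : Ctx T T' L a A) {n : ℕ} (hP : Ppred T' L a n) :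
    InjOn T (Ioo (rq n) (sq n)) ∧ ∀ u ∈ Ioo (rq n) (sq n), phi T T' n (T u) = u := by
  classical
  have hsubA : Ioo (rq n) (sq n) ⊆ A := hP.2.1.trans (IooA hc hP.1)
  have hcontT : ContinuousOn T (Ioo (rq n) (sq n)) := fun u hu =>
    ((hc.hderiv u (hsubA hu)).continuousAt).continuousWithinAt
  have hderiv' : ∀ u ∈ interior (Ioo (rq n) (sq n)), deriv T u = T' u := by
    rw [interior_Ioo]
    exact fun u hu => (hc.hderiv u (hsubA hu)).deriv
  rcases hP.2.2 with hpos | hneg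
  · have hSM : StrictMonoOn T (Ioo (rq n) (sq n)) := by
      apply strictMonoOn_of_deriv_pos (convex_Ioo _ _) hcontT
      intro u hu
      rw [hderiv' u hu]
      rw [interior_Ioo] at hu
      exact hpos u hu
    refine ⟨hSM.injOn, fun u hu => ?_⟩
    unfold phi
    rw [if_pos hpos]
    have hset : {v | v ∈ Ioo (rq n) (sq n) ∧ T v ≤ T u} = Ioc (rq n) u := by
      ext v
      constructor
      · rintro ⟨hv, hTv⟩
        refine ⟨hv.1, ?_⟩
        by_contra hgt
        push_neg at hgt
        exact absurd hTv (not_le.mpr (hSM hu hv hgt))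
      · rintro ⟨hv1, hv2⟩
        have hvIoo : v ∈ Ioo (rq n) (sq n) := ⟨hv1, lt_of_le_of_lt hv2 hu.2⟩
        exact ⟨hvIoo, hSM.monotoneOn hvIoo hu hv2⟩
    rw [hset]
    exact csSup_Ioc hu.1
  · have hSM : StrictAntiOn T (Ioo (rq n) (sq n)) := by
      apply strictAntiOn_of_deriv_neg (convex_Ioo _ _) hcontT
      intro u hu
      rw [hderiv' u hu]
      rw [interior_Ioo] at hu
      exact hneg u hu
    refine ⟨hSM.injOn, fun u hu => ?_⟩
    have hnotpos : ¬ posOn T' n := by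
      intro hpos
      exact absurd (hpos u hu) (not_lt.mpr (le_of_lt (hneg u hu)))
    unfold phi
    rw [if_neg hnotpos]
    have hset : {v | v ∈ Ioo (rq n) (sq n) ∧ T u ≤ T v} = Ioc (rq n) u := by
      ext v
      constructor
      · rintro ⟨hv, hTv⟩
        refine ⟨hv.1, ?_⟩
        by_contra hgt
        push_neg at hgt
        exact absurd hTv (not_le.mpr (hSM hu hv hgt))
      · rintro ⟨hv1, hv2⟩
        have hvIoo : v ∈ Ioo (rq n) (sq n) := ⟨hv1, lt_of_le_of_lt hv2 hu.2⟩
        exact ⟨hvIoo, hSM.antitoneOn hvIoo hu hv2⟩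
    rw [hset]
    exact csSup_Ioc hu.1

/-! ### measurability of the pieces machinery -/

lemma meas_phi (hc : Ctx T T' L a A) {n : ℕ} (hP : Ppred T' L a n) :
    Measurable (phi T T' n) := by
  classical
  have hsub01 : Ioo (rq n) (sq n) ⊆ Icc (0:ℝ) 1 := by
    intro u hu
    have h1 : (0:ℝ) ≤ a (lq n) := by
      have := amono hc (lq n) (le_of_lt hP.1) 0 (Nat.zero_le _)
      rwa [hc.ha0] at this
    have h2 : a (lq n + 1) ≤ 1 := by
      have := amono hc L (le_refl _) (lq n + 1) hP.1
      rwa [hc.haL] at this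
    have := hP.2.1 hu
    exact ⟨le_of_lt (lt_of_le_of_lt h1 this.1), le_of_lt (lt_of_lt_of_le this.2 h2)⟩
  have hbdd : ∀ x : ℝ, BddAbove {u | u ∈ Ioo (rq n) (sq n) ∧ T u ≤ x} :=
    fun x => ⟨1, fun u hu => (hsub01 hu.1).2⟩
  have hbdd' : ∀ x : ℝ, BddAbove {u | u ∈ Ioo (rq n) (sq n) ∧ x ≤ T u} :=
    fun x => ⟨1, fun u hu => (hsub01 hu.1).2⟩
  have hnonneg : ∀ (s : Set ℝ), s ⊆ Icc (0:ℝ) 1 → BddAbove s → (0:ℝ) ≤ sSup s ∨ s = ∅ := by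
    intro s hs hb
    rcases s.eq_empty_or_nonempty with h | ⟨u, hu⟩
    · exact Or.inr h
    · exact Or.inl (le_trans (hs hu).1 (le_csSup hb hu))
  unfold phi
  split_ifs with hcond
  · apply Monotone.measurable
    intro x y hxy
    simp only []
    by_cases hx : {u | u ∈ Ioo (rq n) (sq n) ∧ T u ≤ x}.Nonempty
    · exact csSup_le_csSup (hbdd y) hx (fun u hu => ⟨hu.1, hu.2.trans hxy⟩)
    · rw [not_nonempty_iff_eq_empty.mp hx, Real.sSup_empty]
      rcases hnonneg _ (fun u hu => hsub01 hu.1) (hbdd y) with h | h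
      · exact h
      · rw [h, Real.sSup_empty]
  · apply Antitone.measurable
    intro x y hxy
    simp only []
    by_cases hy : {u | u ∈ Ioo (rq n) (sq n) ∧ y ≤ T u}.Nonempty
    · exact csSup_le_csSup (hbdd' x) hy (fun u hu => ⟨hu.1, hxy.trans hu.2⟩)
    · rw [not_nonempty_iff_eq_empty.mp hy, Real.sSup_empty]
      rcases hnonneg _ (fun u hu => hsub01 hu.1) (hbdd' x) with h | h
      · exact h
      · rw [h, Real.sSup_empty]

lemma meas_Wn (hc : Ctx T T' L a A) {n : ℕ} (hP : Ppred T' L a n) :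
    Measurable (Wn T' a n) := by
  have hind : Measurable ((Ioo (a (lq n)) (a (lq n + 1))).indicator T') :=
    measurable_indicator_of_continuousOn measurableSet_Ioo (hc.hcont (lq n) hP.1)
  exact (measurable_const.div hind.abs).ennreal_ofReal

lemma meas_image (hc : Ctx T T' L a A) {n : ℕ} {t : ℝ} :
    MeasurableSet (T '' (Ep T' L a n ∩ Iic t)) := by
  classical
  by_cases hP : Ppred T' L a n
  · apply measurable_image_of_fderivWithin ((measEp n).inter measurableSet_Iic)
      (f' := fun x => ContinuousLinearMap.smulRight (1 : ℝ →L[ℝ] ℝ) (T' x))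
    · intro x hx
      exact ((hc.hderiv x (Ep_subset_A hc n hx.1)).hasFDerivAt).hasFDerivWithinAt
    · exact (strictOn hc hP).1.mono
        (inter_subset_left.trans ((Ep_subset_Qp n).trans (Qp_subset_Ioo n)))
  · have hEp : Ep T' L a n = ∅ := by
      rw [← subset_empty_iff, ← Qp_eq_of_notP hP]
      exact Ep_subset_Qp n
    rw [hEp]
    simp

lemma meas_hfun (hc : Ctx T T' L a A) (n : ℕ) (t : ℝ) : Measurable (hfun T T' L a n t) := by
  classical
  by_cases hP : Ppred T' L a n
  · exact ((meas_Wn hc hP).comp (meas_phi hc hP)).indicator (meas_image hc)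
  · have hEp : Ep T' L a n = ∅ := by
      rw [← subset_empty_iff, ← Qp_eq_of_notP hP]
      exact Ep_subset_Qp n
    have : hfun T T' L a n t = fun _ => 0 := by
      funext x
      unfold hfun
      rw [hEp]
      simp
    rw [this]
    exact measurable_const

lemma meas_GEm (hc : Ctx T T' L a A) (t : ℝ) : Measurable (GEm T T' L a t) := by
  exact Measurable.ennreal_tsum (fun n => meas_hfun hc n t)

/-! ### the decomposition -/

lemma GE_eq_lintegral_count (hc : Ctx T T' L a A) (x t : ℝ) :
    GE T T' A x t = ∫⁻ u in {u : ℝ | u ∈ A ∧ T u = x ∧ u ≤ t}, wfun T' u ∂Measure.count := by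
  rw [GE, tsum_subtype, ← lintegral_count, ← lintegral_indicator (measSset hc x t)]

lemma slice_eq (hc : Ctx T T' L a A) {n : ℕ} {x t : ℝ}
    (hx : x ∈ T '' (Ep T' L a n ∩ Iic t)) :
    {u : ℝ | u ∈ A ∧ T u = x ∧ u ≤ t} ∩ Ep T' L a n = {phi T T' n x} ∧
      phi T T' n x ∈ Ep T' L a n := by
  classical
  obtain ⟨u₀, hu₀, hTu₀⟩ := hx
  have hP : Ppred T' L a n := by
    by_contra h
    have hEp : Ep T' L a n = ∅ := by
      rw [← subset_empty_iff, ← Qp_eq_of_notP h]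
      exact Ep_subset_Qp n
    rw [hEp] at hu₀
    exact absurd hu₀.1 (notMem_empty u₀)
  have hQIoo : Qp T' L a n = Ioo (rq n) (sq n) := Qp_eq_of_P hP
  have hu₀Ioo : u₀ ∈ Ioo (rq n) (sq n) := hQIoo ▸ Ep_subset_Qp n hu₀.1
  have hphi : phi T T' n x = u₀ := by
    rw [← hTu₀]
    exact (strictOn hc hP).2 u₀ hu₀Ioo
  constructor
  · ext v
    simp only [Set.mem_inter_iff, Set.mem_setOf_eq, Set.mem_singleton_iff]
    constructor
    · rintro ⟨⟨hvA, hvT, hvt⟩, hvEp⟩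
      have hvIoo : v ∈ Ioo (rq n) (sq n) := hQIoo ▸ Ep_subset_Qp n hvEp
      rw [hphi]
      exact (strictOn hc hP).1 hvIoo hu₀Ioo (hvT.trans hTu₀.symm)
    · rintro rfl
      rw [hphi]
      exact ⟨⟨Ep_subset_A hc n hu₀.1, hTu₀, hu₀.2⟩, hu₀.1⟩
  · rw [hphi]
    exact hu₀.1

lemma slice_empty (hc : Ctx T T' L a A) {n : ℕ} {x t : ℝ}
    (hx : x ∉ T '' (Ep T' L a n ∩ Iic t)) :
    {u : ℝ | u ∈ A ∧ T u = x ∧ u ≤ t} ∩ Ep T' L a n = ∅ := by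
  ext v
  simp only [Set.mem_inter_iff, Set.mem_setOf_eq, Set.mem_empty_iff_false, iff_false]
  rintro ⟨⟨hvA, hvT, hvt⟩, hvEp⟩
  exact hx ⟨v, ⟨hvEp, hvt⟩, hvT⟩

lemma GE_eq_GEm (hc : Ctx T T' L a A) (x t : ℝ) : GE T T' A x t = GEm T T' L a t x := by
  classical
  rw [GE_eq_lintegral_count hc]
  set S := {u : ℝ | u ∈ A ∧ T u = x ∧ u ≤ t} with hSdef
  have hS : MeasurableSet S := measSset hc x t
  set U := ⋃ n, Ep T' L a n with hUdef
  have hUm : MeasurableSet U := MeasurableSet.iUnion (fun n => measEp n)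
  have hsplit : S = (S \ U) ∪ (S ∩ U) := by
    rw [diff_union_inter]
  have h1 : ∫⁻ u in S, wfun T' u ∂Measure.count
      = ∫⁻ u in S \ U, wfun T' u ∂Measure.count
        + ∫⁻ u in S ∩ U, wfun T' u ∂Measure.count := by
    conv_lhs => rw [hsplit]
    exact lintegral_union (hS.inter hUm) disjoint_sdiff_inter
  have h2 : ∫⁻ u in S \ U, wfun T' u ∂Measure.count = 0 := by
    have hz : ∀ᵐ u ∂Measure.count, u ∈ S \ U → wfun T' u = 0 := by
      apply ae_of_all
      rintro u ⟨huS, huU⟩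
      have hT'u : T' u = 0 := by
        by_contra h
        exact huU (cover hc huS.1 h)
      rw [wfun, hT'u]
      simp
    rw [setLIntegral_congr_fun_ae (hS.diff hUm) hz]
    simp
  have h3 : S ∩ U = ⋃ n, S ∩ Ep T' L a n := by rw [inter_iUnion]
  have h4 : ∫⁻ u in S ∩ U, wfun T' u ∂Measure.count
      = ∑' n, ∫⁻ u in S ∩ Ep T' L a n, wfun T' u ∂Measure.count := by
    rw [h3]
    exact lintegral_iUnion (fun n => hS.inter (measEp n))
      (fun i j hij => ((disjoint_disjointed (Qp T' L a)) hij).mono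
        inter_subset_right inter_subset_right) _
  have h5 : ∀ n, ∫⁻ u in S ∩ Ep T' L a n, wfun T' u ∂Measure.count
      = hfun T T' L a n t x := by
    intro n
    by_cases hx : x ∈ T '' (Ep T' L a n ∩ Iic t)
    · obtain ⟨hsl, hmem⟩ := slice_eq hc hx
      rw [hsl, Measure.restrict_singleton, lintegral_smul_measure, lintegral_dirac,
        Measure.count_singleton, one_smul]
      have hP : Ppred T' L a n := by
        by_contra h
        have hEp : Ep T' L a n = ∅ := by
          rw [← subset_empty_iff, ← Qp_eq_of_notP h]
          exact Ep_subset_Qp n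
        rw [hEp] at hmem
        exact absurd hmem (notMem_empty _)
      have hmemIoo : phi T T' n x ∈ Ioo (a (lq n)) (a (lq n + 1)) :=
        hP.2.1 ((Qp_eq_of_P hP) ▸ Ep_subset_Qp n hmem)
      rw [hfun, indicator_of_mem hx, Wn, indicator_of_mem hmemIoo, wfun]
    · rw [slice_empty hc hx, Measure.restrict_empty, lintegral_zero_measure,
        hfun, indicator_of_notMem hx]
  rw [h1, h2, h4, zero_add, GEm]
  exact tsum_congr h5

/-! ### change of variables -/

lemma cov_piece (hc : Ctx T T' L a A) (n : ℕ) (t : ℝ) {B : Set ℝ} (hB : MeasurableSet B) :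
    ∫⁻ x in B, hfun T T' L a n t x = volume (Ep T' L a n ∩ Iic t ∩ T ⁻¹' B) := by
  classical
  by_cases hP : Ppred T' L a n
  · set s' := Ep T' L a n ∩ Iic t ∩ T ⁻¹' B with hs'def
    have hs'm : MeasurableSet s' := ((measEp n).inter measurableSet_Iic).inter (hc.hmeas hB)
    have hs'Ioo : s' ⊆ Ioo (rq n) (sq n) := fun u hu =>
      (Qp_eq_of_P hP) ▸ Ep_subset_Qp n hu.1.1
    have hs'A : s' ⊆ A := fun u hu => Ep_subset_A hc n hu.1.1
    have h1 : ∫⁻ x in B, hfun T T' L a n t x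
        = ∫⁻ x in T '' (Ep T' L a n ∩ Iic t) ∩ B,
            Wn T' a n (phi T T' n x) := by
      simp only [hfun]
      rw [← lintegral_indicator hB, Set.indicator_indicator, inter_comm B,
        lintegral_indicator ((meas_image hc (n := n) (t := t)).inter hB)]
    have h2 : T '' (Ep T' L a n ∩ Iic t) ∩ B = T '' s' := by
      rw [hs'def]
      exact (Set.image_inter_preimage T _ _).symm
    have h3 := lintegral_image_eq_lintegral_abs_det_fderiv_mul volume hs'm
      (f' := fun x => ContinuousLinearMap.smulRight (1 : ℝ →L[ℝ] ℝ) (T' x))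
      (fun x hx => ((hc.hderiv x (hs'A hx)).hasFDerivAt).hasFDerivWithinAt)
      ((strictOn hc hP).1.mono hs'Ioo)
      (fun x => Wn T' a n (phi T T' n x))
    have h4 : ∫⁻ u in s', ENNReal.ofReal
          |(ContinuousLinearMap.smulRight (1 : ℝ →L[ℝ] ℝ) (T' u)).det|
          * Wn T' a n (phi T T' n (T u)) = ∫⁻ u in s', 1 := by
      apply setLIntegral_congr_fun hs'm
      intro u hu
      beta_reduce
      have huIoo : u ∈ Ioo (rq n) (sq n) := hs'Ioo hu
      have hphi : phi T T' n (T u) = u := (strictOn hc hP).2 u huIoo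
      have hne : T' u ≠ 0 := Qp_ne_zero hc n u (by rw [Qp_eq_of_P hP]; exact huIoo)
      have hdet : (ContinuousLinearMap.smulRight (1 : ℝ →L[ℝ] ℝ) (T' u)).det = T' u :=
        ContinuousLinearMap.det_toSpanSingleton (T' u)
      rw [hphi, hdet, Wn, indicator_of_mem (hP.2.1 huIoo)]
      rw [← ENNReal.ofReal_mul (abs_nonneg _)]
      rw [mul_one_div, div_self (abs_ne_zero.mpr hne)]
      simp
    rw [h1, h2, h3, h4, setLIntegral_one]
  · have hEp : Ep T' L a n = ∅ := by
      rw [← subset_empty_iff, ← Qp_eq_of_notP hP]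
      exact Ep_subset_Qp n
    have : hfun T T' L a n t = fun _ => 0 := by
      funext x
      unfold hfun
      rw [hEp]
      simp
    rw [this, hEp]
    simp

lemma crux (hc : Ctx T T' L a A) (t : ℝ) {B : Set ℝ} (hB : MeasurableSet B) :
    ∫⁻ x in B, GE T T' A x t = volume ((⋃ n, Ep T' L a n) ∩ Iic t ∩ T ⁻¹' B) := by
  have h0 : ∀ x, GE T T' A x t = GEm T T' L a t x := fun x => GE_eq_GEm hc x t
  calc ∫⁻ x in B, GE T T' A x t = ∫⁻ x in B, GEm T T' L a t x := by
        exact lintegral_congr (fun x => h0 x)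
    _ = ∑' n, ∫⁻ x in B, hfun T T' L a n t x := by
        simp only [GEm]
        exact lintegral_tsum (fun n => (meas_hfun hc n t).aemeasurable)
    _ = ∑' n, volume (Ep T' L a n ∩ Iic t ∩ T ⁻¹' B) := by
        exact tsum_congr (fun n => cov_piece hc n t hB)
    _ = volume ((⋃ n, Ep T' L a n) ∩ Iic t ∩ T ⁻¹' B) := by
        rw [iUnion_inter, iUnion_inter, measure_iUnion]
        · exact fun i j hij => (((disjoint_disjointed (Qp T' L a)) hij).mono
            (inter_subset_left.trans inter_subset_left)
            (inter_subset_left.trans inter_subset_left))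
        · exact fun n => ((measEp n).inter measurableSet_Iic).inter (hc.hmeas hB)

/-! ### null sets -/

lemma sard (hc : Ctx T T' L a A) : volume (A \ ⋃ n, Ep T' L a n) = 0 := by
  set N := A \ ⋃ n, Ep T' L a n with hNdef
  have hderiv0 : ∀ u ∈ N, T' u = 0 := by
    rintro u ⟨huA, huU⟩
    by_contra h
    exact huU (cover hc huA h)
  have himg : volume (T '' N) = 0 := by
    apply addHaar_image_eq_zero_of_det_fderivWithin_eq_zero volume
      (f' := fun x => ContinuousLinearMap.smulRight (1 : ℝ →L[ℝ] ℝ) (T' x))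
    · intro x hx
      exact ((hc.hderiv x hx.1).hasFDerivAt).hasFDerivWithinAt
    · intro x hx
      rw [ContinuousLinearMap.det_smulRight, hderiv0 x hx, mul_zero]
  obtain ⟨M, hM1, hM2, hM3⟩ := exists_measurable_superset volume (T '' N)
  rw [himg] at hM3
  have hNsub : N ⊆ Icc (0:ℝ) 1 ∩ T ⁻¹' M := by
    intro u hu
    refine ⟨Ioo_subset_Icc_self (A_subset hc hu.1), hM1 ⟨u, hu, rfl⟩⟩
  refine le_antisymm ?_ zero_le
  calc volume N ≤ volume (Icc (0:ℝ) 1 ∩ T ⁻¹' M) := measure_mono hNsub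
    _ = unif (T ⁻¹' M) := by
        rw [unif_def, Measure.restrict_apply (hc.hmeas hM2), inter_comm]
    _ = Measure.map T unif M := (Measure.map_apply hc.hmeas hM2).symm
    _ = unif M := by rw [hc.hudp]
    _ ≤ volume M := by
        rw [unif_def, Measure.restrict_apply hM2]
        exact measure_mono inter_subset_left
    _ = 0 := hM3

lemma compl_Ep_null (hc : Ctx T T' L a A) : volume (Icc (0:ℝ) 1 \ ⋃ n, Ep T' L a n) = 0 := by
  have hsub : Icc (0:ℝ) 1 \ ⋃ n, Ep T' L a n
      ⊆ (Icc (0:ℝ) 1 \ A) ∪ (A \ ⋃ n, Ep T' L a n) := by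
    rintro x ⟨hx1, hx2⟩
    by_cases hA : x ∈ A
    · exact Or.inr ⟨hA, hx2⟩
    · exact Or.inl ⟨hx1, hA⟩
  exact measure_mono_null hsub
    (measure_union_null (compl_A_null hc) (sard hc))

lemma crux' (hc : Ctx T T' L a A) (t : ℝ) {B : Set ℝ} (hB : MeasurableSet B) :
    ∫⁻ x in B, GE T T' A x t ∂unif = unif (Iic t ∩ T ⁻¹' B) := by
  have hBm : MeasurableSet (B ∩ Icc (0:ℝ) 1) := hB.inter measurableSet_Icc
  have hU : MeasurableSet (⋃ n, Ep T' L a n) := MeasurableSet.iUnion (fun n => measEp n)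
  have hUsub : (⋃ n, Ep T' L a n) ⊆ A := iUnion_subset (fun n => Ep_subset_A hc n)
  rw [unif_def, Measure.restrict_restrict hB]
  rw [crux hc t hBm]
  have hset : (⋃ n, Ep T' L a n) ∩ Iic t ∩ T ⁻¹' (B ∩ Icc (0:ℝ) 1)
      = (⋃ n, Ep T' L a n) ∩ Iic t ∩ T ⁻¹' B := by
    ext u
    simp only [Set.mem_inter_iff, Set.mem_preimage]
    constructor
    · rintro ⟨h1, h2⟩
      exact ⟨h1, h2.1⟩
    · rintro ⟨h1, h2⟩
      exact ⟨h1, h2, hc.hmaps (Ioo_subset_Icc_self (A_subset hc (hUsub h1.1)))⟩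
  rw [hset]
  have hIic : (Iic t ∩ T ⁻¹' B) ∩ Icc (0:ℝ) 1
      = ((⋃ n, Ep T' L a n) ∩ Iic t ∩ T ⁻¹' B) ∪
        (((Iic t ∩ T ⁻¹' B) ∩ Icc (0:ℝ) 1) \ (⋃ n, Ep T' L a n)) := by
    apply Subset.antisymm
    · intro u hu
      by_cases hE : u ∈ ⋃ n, Ep T' L a n
      · exact Or.inl ⟨⟨hE, hu.1.1⟩, hu.1.2⟩
      · exact Or.inr ⟨hu, hE⟩
    · rintro u (⟨⟨h1, h2⟩, h3⟩ | ⟨hu, _⟩)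
      · exact ⟨⟨h2, h3⟩, Ioo_subset_Icc_self (A_subset hc (hUsub h1))⟩
      · exact hu
  have hle1 : volume ((⋃ n, Ep T' L a n) ∩ Iic t ∩ T ⁻¹' B)
      ≤ volume ((Iic t ∩ T ⁻¹' B) ∩ Icc (0:ℝ) 1) := by
    apply measure_mono
    rintro u ⟨⟨h1, h2⟩, h3⟩
    exact ⟨⟨h2, h3⟩, Ioo_subset_Icc_self (A_subset hc (hUsub h1))⟩
  have hle2 : volume ((Iic t ∩ T ⁻¹' B) ∩ Icc (0:ℝ) 1)
      ≤ volume ((⋃ n, Ep T' L a n) ∩ Iic t ∩ T ⁻¹' B) := by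
    conv_lhs => rw [hIic]
    refine (measure_union_le _ _).trans ?_
    have h0 : volume ((((Iic t ∩ T ⁻¹' B) ∩ Icc (0:ℝ) 1)) \ (⋃ n, Ep T' L a n)) = 0 := by
      apply measure_mono_null _ (compl_Ep_null hc)
      rintro u ⟨⟨_, hu2⟩, hu3⟩
      exact ⟨hu2, hu3⟩
    rw [h0, add_zero]
  rw [Measure.restrict_apply (measurableSet_Iic.inter (hc.hmeas hB))]
  exact le_antisymm hle1 hle2

/-! ### total mass one a.e. -/

lemma total_mass (hc : Ctx T T' L a A) : ∀ᵐ x ∂unif, GE T T' A x 1 = 1 := by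
  have h1 : (fun x => GEm T T' L a 1 x) =ᵐ[unif] fun _ => 1 := by
    apply ae_eq_of_forall_setLIntegral_eq_of_sigmaFinite (meas_GEm hc 1) measurable_const
    intro s hs _
    have he : ∫⁻ x in s, GEm T T' L a 1 x ∂unif = ∫⁻ x in s, GE T T' A x 1 ∂unif :=
      lintegral_congr (fun x => (GE_eq_GEm hc x 1).symm)
    rw [he, crux' hc 1 hs, setLIntegral_one]
    have h2 : unif (Iic 1 ∩ T ⁻¹' s) = unif (T ⁻¹' s) := by
      rw [unif_def, Measure.restrict_apply (measurableSet_Iic.inter (hc.hmeas hs)),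
        Measure.restrict_apply (hc.hmeas hs)]
      congr 1
      ext u
      simp only [Set.mem_inter_iff, Set.mem_Iic, Set.mem_preimage, Set.mem_Icc]
      constructor
      · rintro ⟨⟨_, h⟩, h2⟩
        exact ⟨h, h2⟩
      · rintro ⟨h, h2⟩
        exact ⟨⟨h2.2, h⟩, h2⟩
    rw [h2, ← Measure.map_apply hc.hmeas hs, hc.hudp]
  filter_upwards [h1] with x hx
  rw [GE_eq_GEm hc]
  exact hx

/-! ### behaviour of `GE` in `t` -/

lemma GE_mono (hc : Ctx T T' L a A) (x : ℝ) {t₁ t₂ : ℝ} (h : t₁ ≤ t₂) :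
    GE T T' A x t₁ ≤ GE T T' A x t₂ := by
  rw [GE_eq_lintegral_count hc, GE_eq_lintegral_count hc]
  apply lintegral_mono_set
  rintro u ⟨h1, h2, h3⟩
  exact ⟨h1, h2, h3.trans h⟩

lemma GE_le_one' (hc : Ctx T T' L a A) {x : ℝ} (hx : GE T T' A x 1 = 1) (t : ℝ) :
    GE T T' A x t ≤ 1 := by
  rcases le_total t 1 with h | h
  · exact (GE_mono hc x h).trans_eq hx
  · have hset : {u : ℝ | u ∈ A ∧ T u = x ∧ u ≤ t} = {u : ℝ | u ∈ A ∧ T u = x ∧ u ≤ 1} := by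
      ext u
      simp only [Set.mem_setOf_eq]
      constructor
      · rintro ⟨h1, h2, _⟩
        exact ⟨h1, h2, le_of_lt (A_subset hc h1).2⟩
      · rintro ⟨h1, h2, _⟩
        exact ⟨h1, h2, le_of_lt (lt_of_lt_of_le (A_subset hc h1).2 h)⟩
    rw [GE_eq_lintegral_count hc, hset, ← GE_eq_lintegral_count hc, hx]

lemma GE_neg (hc : Ctx T T' L a A) {x t : ℝ} (ht : t < 0) : GE T T' A x t = 0 := by
  have hset : {u : ℝ | u ∈ A ∧ T u = x ∧ u ≤ t} = (∅ : Set ℝ) := by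
    ext u
    simp only [Set.mem_setOf_eq, Set.mem_empty_iff_false, iff_false, not_and]
    intro h1 _ h3
    exact absurd (lt_of_le_of_lt h3 ht) (not_lt.mpr (le_of_lt (A_subset hc h1).1))
  rw [GE, hset]
  exact tsum_empty

lemma Gfun_eq_toReal (x t : ℝ) : Gfun T T' A x t = (GE T T' A x t).toReal := by
  rw [Gfun, GE]
  simp only [wfun]
  rw [ENNReal.tsum_toReal_eq (fun _ => ENNReal.ofReal_ne_top)]
  exact tsum_congr (fun u =>
    (ENNReal.toReal_ofReal (one_div_nonneg.mpr (abs_nonneg _))).symm)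

lemma GE_right_cts (hc : Ctx T T' L a A) {x : ℝ} (hx : GE T T' A x 1 = 1) (t : ℝ) (z : ℝ)
    (h : ∀ s, t < s → ENNReal.ofReal z ≤ GE T T' A x s) : ENNReal.ofReal z ≤ GE T T' A x t := by
  classical
  set SA := {u : ℝ | u ∈ A ∧ T u = x} with hSAdef
  have hSA : MeasurableSet SA := by
    have : SA = A ∩ T ⁻¹' {x} := by
      ext u
      simp [hSAdef]
    rw [this]
    exact (measA hc).inter (hc.hmeas (measurableSet_singleton x))
  set ν := (Measure.count.restrict SA).withDensity (wfun T') with hνdef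
  have hν : ∀ s : Set ℝ, MeasurableSet s → ν s = ∫⁻ u in s ∩ SA, wfun T' u ∂Measure.count := by
    intro s hs
    rw [hνdef, withDensity_apply _ hs, Measure.restrict_restrict hs]
  have hGE : ∀ s : ℝ, GE T T' A x s = ν (Iic s) := by
    intro s
    have hset : {u : ℝ | u ∈ A ∧ T u = x ∧ u ≤ s} = Iic s ∩ SA := by
      ext u
      simp only [Set.mem_setOf_eq, Set.mem_inter_iff, Set.mem_Iic, hSAdef]
      tauto
    rw [GE_eq_lintegral_count hc, hset, hν _ measurableSet_Iic]
  set sfun : ℕ → Set ℝ := fun n => Iic (t + 1/(n+1)) with hsfun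
  have hanti : Antitone sfun := by
    intro m n hmn
    apply Iic_subset_Iic.mpr
    have h1 : (0:ℝ) < m + 1 := by positivity
    have h2 : (m:ℝ) + 1 ≤ (n:ℝ) + 1 := by
      have := (Nat.cast_le (α := ℝ)).mpr hmn
      linarith
    have := one_div_le_one_div_of_le h1 h2
    linarith
  have hfin : ν (sfun 0) ≠ ⊤ := by
    rw [hsfun, ← hGE]
    exact ((GE_le_one' hc hx _).trans_lt ENNReal.one_lt_top).ne
  have htend := tendsto_measure_iInter_atTop
    (fun n => measurableSet_Iic.nullMeasurableSet) hanti ⟨0, hfin⟩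
  have hInter : ⋂ n, sfun n = Iic t := by
    ext y
    simp only [Set.mem_iInter, hsfun, Set.mem_Iic]
    constructor
    · intro hy
      by_contra hgt
      push_neg at hgt
      obtain ⟨n, hn⟩ := exists_nat_one_div_lt (show (0:ℝ) < y - t by linarith)
      exact absurd (hy n) (by push_neg; linarith)
    · intro hy n
      have : (0:ℝ) < 1/(n+1) := by positivity
      linarith
  rw [hInter] at htend
  have hle : ∀ n : ℕ, ENNReal.ofReal z ≤ (ν ∘ sfun) n := by
    intro n
    have hpos : (0:ℝ) < 1/((n:ℝ)+1) := by positivity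
    have := h (t + 1/(n+1)) (by linarith)
    rwa [hGE] at this
  have := ge_of_tendsto' htend hle
  rwa [hGE]

lemma good_mem_image (hc : Ctx T T' L a A) {x : ℝ} (hx : GE T T' A x 1 = 1) : x ∈ T '' A := by
  by_contra hxm
  have hset : {u : ℝ | u ∈ A ∧ T u = x ∧ u ≤ 1} = (∅ : Set ℝ) := by
    ext u
    simp only [Set.mem_setOf_eq, Set.mem_empty_iff_false, iff_false, not_and]
    intro h1 h2
    exact absurd ⟨u, h1, h2⟩ hxm
  have : GE T T' A x 1 = 0 := by
    rw [GE, hset]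
    exact tsum_empty
  rw [this] at hx
  exact zero_ne_one hx

lemma key_iff (hc : Ctx T T' L a A) {x : ℝ} (hx : GE T T' A x 1 = 1) {z : ℝ}
    (hz : z ∈ Ioo (0:ℝ) 1) (t : ℝ) :
    sInf {s : ℝ | z ≤ Gfun T T' A x s} ≤ t ↔ ENNReal.ofReal z ≤ GE T T' A x t := by
  have hfin : ∀ s : ℝ, GE T T' A x s ≠ ⊤ :=
    fun s => ((GE_le_one' hc hx s).trans_lt ENNReal.one_lt_top).ne
  have hiff : ∀ s : ℝ, z ≤ Gfun T T' A x s ↔ ENNReal.ofReal z ≤ GE T T' A x s := by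
    intro s
    rw [Gfun_eq_toReal, ENNReal.ofReal_le_iff_le_toReal (hfin s)]
  have hne : {s : ℝ | z ≤ Gfun T T' A x s}.Nonempty := by
    refine ⟨1, ?_⟩
    rw [Set.mem_setOf_eq, hiff 1, hx]
    exact ENNReal.ofReal_le_one.mpr hz.2.le
  have hbdd : BddBelow {s : ℝ | z ≤ Gfun T T' A x s} := by
    refine ⟨0, fun s hs => ?_⟩
    by_contra hneg
    push_neg at hneg
    have h0 : Gfun T T' A x s = 0 := by
      rw [Gfun_eq_toReal, GE_neg hc hneg]
      simp
    rw [Set.mem_setOf_eq, h0] at hs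
    exact absurd hs (not_le.mpr hz.1)
  constructor
  · intro h
    apply GE_right_cts hc hx
    intro s hs
    obtain ⟨s', hs', hlt⟩ := exists_lt_of_csInf_lt hne (lt_of_le_of_lt h hs)
    exact ((hiff s').mp hs').trans (GE_mono hc x hlt.le)
  · intro h
    exact csInf_le hbdd ((hiff t).mpr h)

end

end Stmt8Aux

open Stmt8Aux

/-- If `T` is a regular udp transformation and `V, Z` are independent `Uniform(0,1)`
random variables, then the stochastic inverse `T⁻(V,Z)` is uniformly distributed. -/
theorem stmt8 {Ω : Type*} [MeasurableSpace Ω] (P : Measure Ω) [IsProbabilityMeasure P]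
    (T T' : ℝ → ℝ) (hmeas : Measurable T)
    (hmaps : MapsTo T (Icc (0:ℝ) 1) (Icc (0:ℝ) 1)) (hudp : UDP T)
    (L : ℕ) (hL : 0 < L) (a : ℕ → ℝ) (ha0 : a 0 = 0) (haL : a L = 1)
    (hmono : ∀ ℓ < L, a ℓ < a (ℓ+1))
    (A : Set ℝ) (hA : A = ⋃ ℓ ∈ Finset.range L, Ioo (a ℓ) (a (ℓ+1)))
    (hderiv : ∀ x ∈ A, HasDerivAt T (T' x) x)
    (hcont : ∀ ℓ < L, ContinuousOn T' (Ioo (a ℓ) (a (ℓ+1))))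
    (V Z : Ω → ℝ) (hV : Measurable V) (hZ : Measurable Z)
    (hVu : Measure.map V P = unif) (hZu : Measure.map Z P = unif)
    (hindep : ProbabilityTheory.IndepFun V Z P) :
    Measure.map (fun ω => stochInv T T' A (V ω) (Z ω)) P = unif := by
  classical
  have hc : Ctx T T' L a A := ⟨hmeas, hmaps, hudp, hL, ha0, haL, hmono, hA, hderiv, hcont⟩
  set good : Set ℝ := {x | GE T T' A x 1 = 1} with hgood
  have hgoodm : MeasurableSet good := by
    have hgeq : good = {x | GEm T T' L a 1 x = 1} := by
      ext x
      rw [hgood]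
      simp only [Set.mem_setOf_eq, GE_eq_GEm hc]
    rw [hgeq]
    exact (meas_GEm hc 1) (measurableSet_singleton 1)
  have hgoodae : unif goodᶜ = 0 := by
    rw [hgood, compl_setOf]
    exact ae_iff.mp (total_mass hc)
  set Qm : ℝ × ℝ → ℝ := fun p =>
    if p.1 ∈ good ∧ p.2 ∈ Ioo (0:ℝ) 1 then sInf {s : ℝ | p.2 ≤ Gfun T T' A p.1 s} else 0
    with hQm
  have hQmmeas : Measurable Qm := by
    apply measurable_of_Iic
    intro t
    have hs1 : MeasurableSet {p : ℝ × ℝ | p.2 ≤ (GEm T T' L a t p.1).toReal} :=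
      measurableSet_le measurable_snd
        (((meas_GEm hc t).comp measurable_fst).ennreal_toReal)
    have hgood2 : MeasurableSet {p : ℝ × ℝ | p.1 ∈ good ∧ p.2 ∈ Ioo (0:ℝ) 1} :=
      (hgoodm.preimage measurable_fst).inter (measurableSet_Ioo.preimage measurable_snd)
    have hset : Qm ⁻¹' Iic t =
        ({p : ℝ × ℝ | p.1 ∈ good ∧ p.2 ∈ Ioo (0:ℝ) 1}
            ∩ {p : ℝ × ℝ | p.2 ≤ (GEm T T' L a t p.1).toReal})
        ∪ ({p : ℝ × ℝ | p.1 ∈ good ∧ p.2 ∈ Ioo (0:ℝ) 1}ᶜ ∩ {_p : ℝ × ℝ | (0:ℝ) ≤ t}) := by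
      ext p
      simp only [Set.mem_preimage, Set.mem_Iic, Set.mem_union, Set.mem_inter_iff,
        Set.mem_setOf_eq, Set.mem_compl_iff, hQm]
      by_cases hp : p.1 ∈ good ∧ p.2 ∈ Ioo (0:ℝ) 1
      · rw [if_pos hp]
        have hx : GE T T' A p.1 1 = 1 := hp.1
        have hfin : GE T T' A p.1 t ≠ ⊤ :=
          ((GE_le_one' hc hx t).trans_lt ENNReal.one_lt_top).ne
        have hiff : (sInf {s : ℝ | p.2 ≤ Gfun T T' A p.1 s} ≤ t)
            ↔ p.2 ≤ (GEm T T' L a t p.1).toReal := by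
          rw [key_iff hc hx hp.2 t, ← GE_eq_GEm hc, ENNReal.ofReal_le_iff_le_toReal hfin]
        rw [hiff]
        tauto
      · rw [if_neg hp]
        tauto
    rw [hset]
    exact (hgood2.inter hs1).union (hgood2.compl.inter (MeasurableSet.const _))
  have hpair : Measurable (fun ω => (V ω, Z ω)) := hV.prodMk hZ
  have hmap2 : Measure.map (fun ω => (V ω, Z ω)) P = unif.prod unif := by
    rw [(ProbabilityTheory.indepFun_iff_map_prod_eq_prod_map_map hV.aemeasurable
      hZ.aemeasurable).mp hindep, hVu, hZu]
  have hIoo01c : unif (Ioo (0:ℝ) 1)ᶜ = 0 := by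
    rw [unif_def, Measure.restrict_apply measurableSet_Ioo.compl]
    apply measure_mono_null (t := ({0, 1} : Set ℝ))
    · intro z hz
      rcases eq_or_lt_of_le hz.2.1 with h | h
      · exact Or.inl h.symm
      · rcases eq_or_lt_of_le hz.2.2 with h2 | h2
        · exact Or.inr h2
        · exact absurd ⟨h, h2⟩ hz.1
    · exact (((Set.finite_singleton (1:ℝ)).insert 0).countable).measure_zero volume
  have hbadm : MeasurableSet ((good ×ˢ Ioo (0:ℝ) 1)ᶜ) :=
    (hgoodm.prod measurableSet_Ioo).compl
  have hbad0 : (unif.prod unif) ((good ×ˢ Ioo (0:ℝ) 1)ᶜ) = 0 := by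
    have hsub : (good ×ˢ Ioo (0:ℝ) 1)ᶜ
        ⊆ (goodᶜ ×ˢ (univ : Set ℝ)) ∪ ((univ : Set ℝ) ×ˢ (Ioo (0:ℝ) 1)ᶜ) := by
      intro p hp
      simp only [Set.mem_compl_iff, Set.mem_prod, Set.mem_union, Set.mem_univ, true_and,
        and_true, not_and_or] at hp ⊢
      exact hp
    apply measure_mono_null hsub
    apply measure_union_null
    · rw [Measure.prod_prod, hgoodae, zero_mul]
    · rw [Measure.prod_prod, hIoo01c, mul_zero]
  have hQae : (fun ω => stochInv T T' A (V ω) (Z ω)) =ᵐ[P] (fun ω => Qm (V ω, Z ω)) := by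
    have hP0 : P ((fun ω => (V ω, Z ω)) ⁻¹' (good ×ˢ Ioo (0:ℝ) 1)ᶜ) = 0 := by
      rw [← Measure.map_apply hpair hbadm, hmap2]
      exact hbad0
    rw [Filter.EventuallyEq, ae_iff]
    apply measure_mono_null _ hP0
    intro ω hω
    simp only [Set.mem_setOf_eq] at hω
    simp only [Set.mem_preimage, Set.mem_compl_iff, Set.mem_prod]
    intro hmem
    apply hω
    have hx : GE T T' A (V ω) 1 = 1 := hmem.1
    rw [stochInv, if_pos (good_mem_image hc hx)]
    have hq : Qm (V ω, Z ω) = sInf {s : ℝ | Z ω ≤ Gfun T T' A (V ω) s} := by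
      rw [hQm]
      exact if_pos hmem
    rw [hq]
  have hfinal : Measure.map Qm (unif.prod unif) = unif := by
    have hprob : IsProbabilityMeasure (Measure.map Qm (unif.prod unif)) :=
      Measure.isProbabilityMeasure_map hQmmeas.aemeasurable
    apply Measure.ext_of_Iic
    intro t
    rw [Measure.map_apply hQmmeas measurableSet_Iic,
      Measure.prod_apply (hQmmeas measurableSet_Iic)]
    have hslice : ∀ x ∈ good, unif (Prod.mk x ⁻¹' (Qm ⁻¹' Iic t)) = GE T T' A x t := by
      intro x hx
      have hxg : GE T T' A x 1 = 1 := hx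
      set c := (GE T T' A x t).toReal with hcdef
      have hfin : GE T T' A x t ≠ ⊤ :=
        ((GE_le_one' hc hxg t).trans_lt ENNReal.one_lt_top).ne
      have hc0 : 0 ≤ c := ENNReal.toReal_nonneg
      have hc1 : c ≤ 1 := by
        rw [hcdef]
        have h := GE_le_one' hc hxg t
        have h2 := ENNReal.toReal_mono ENNReal.one_ne_top h
        simpa using h2
      have hsliceset : Prod.mk x ⁻¹' (Qm ⁻¹' Iic t)
          = (Ioo (0:ℝ) 1 ∩ Iic c) ∪ ((Ioo (0:ℝ) 1)ᶜ ∩ {_z : ℝ | (0:ℝ) ≤ t}) := by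
        ext z
        simp only [Set.mem_preimage, Set.mem_Iic, Set.mem_union, Set.mem_inter_iff,
          Set.mem_setOf_eq, Set.mem_compl_iff, hQm]
        by_cases hz : z ∈ Ioo (0:ℝ) 1
        · rw [if_pos ⟨hx, hz⟩]
          have hiff : (sInf {s : ℝ | z ≤ Gfun T T' A x s} ≤ t) ↔ z ≤ c := by
            rw [key_iff hc hxg hz t, hcdef, ENNReal.ofReal_le_iff_le_toReal hfin]
          rw [hiff]
          tauto
        · rw [if_neg (by tauto)]
          tauto
      rw [hsliceset]
      have hK : MeasurableSet ((Ioo (0:ℝ) 1)ᶜ ∩ {_z : ℝ | (0:ℝ) ≤ t}) :=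
        measurableSet_Ioo.compl.inter (MeasurableSet.const _)
      have hDm : MeasurableSet (Ioo (0:ℝ) 1 ∩ Iic c) := measurableSet_Ioo.inter measurableSet_Iic
      have hunion : unif ((Ioo (0:ℝ) 1 ∩ Iic c) ∪ ((Ioo (0:ℝ) 1)ᶜ ∩ {_z : ℝ | (0:ℝ) ≤ t}))
          = volume (Ioo (0:ℝ) 1 ∩ Iic c) := by
        apply le_antisymm
        · refine (measure_union_le _ _).trans ?_
          have h2 : unif ((Ioo (0:ℝ) 1)ᶜ ∩ {_z : ℝ | (0:ℝ) ≤ t}) = 0 :=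
            measure_mono_null inter_subset_left hIoo01c
          rw [h2, add_zero]
          rw [unif_def, Measure.restrict_apply hDm]
          exact measure_mono inter_subset_left
        · rw [unif_def, Measure.restrict_apply (hDm.union hK)]
          apply measure_mono
          intro z hz
          exact ⟨Or.inl hz, ⟨hz.1.1.le, hz.1.2.le⟩⟩
      rw [hunion]
      have hD : volume (Ioo (0:ℝ) 1 ∩ Iic c) = ENNReal.ofReal c := by
        apply le_antisymm
        · calc volume (Ioo (0:ℝ) 1 ∩ Iic c) ≤ volume (Ioc (0:ℝ) c) :=
              measure_mono (fun z hz => ⟨hz.1.1, hz.2⟩)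
            _ = ENNReal.ofReal c := by rw [Real.volume_Ioc, sub_zero]
        · calc ENNReal.ofReal c = volume (Ioo (0:ℝ) c) := by rw [Real.volume_Ioo, sub_zero]
            _ ≤ volume (Ioo (0:ℝ) 1 ∩ Iic c) :=
              measure_mono (fun z hz => ⟨⟨hz.1, lt_of_lt_of_le hz.2 hc1⟩, hz.2.le⟩)
      rw [hD, hcdef, ENNReal.ofReal_toReal hfin]
    have hae : ∀ᵐ x ∂unif, x ∈ good := by
      rw [ae_iff]
      exact measure_mono_null (fun x hx => hx) hgoodae
    have hcongr : ∫⁻ x, unif (Prod.mk x ⁻¹' (Qm ⁻¹' Iic t)) ∂unif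
        = ∫⁻ x, GEm T T' L a t x ∂unif := by
      apply lintegral_congr_ae
      filter_upwards [hae] with x hx
      rw [hslice x hx, GE_eq_GEm hc]
    rw [hcongr]
    have hcrux := crux' hc t MeasurableSet.univ
    rw [Measure.restrict_univ] at hcrux
    have hGEc : ∫⁻ x, GEm T T' L a t x ∂unif = ∫⁻ x, GE T T' A x t ∂unif :=
      lintegral_congr (fun x => (GE_eq_GEm hc x t).symm)
    rw [hGEc, hcrux]
    congr 1
    simp
  calc Measure.map (fun ω => stochInv T T' A (V ω) (Z ω)) P
      = Measure.map (fun ω => Qm (V ω, Z ω)) P := Measure.map_congr hQae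
    _ = Measure.map Qm (Measure.map (fun ω => (V ω, Z ω)) P) :=
        (Measure.map_map hQmmeas hpair).symm
    _ = unif := by rw [hmap2, hfinal]

end
end

section
/- Let C be a bivariate copula and let g, h : [0,1] → ℝ be continuous on [0,1], continuously differentiable on (0,1) with bounded derivatives, and satisfy ∫₀¹ g = ∫₀¹ h = 0. Then ∫₀¹∫₀¹ g(u) h(v) dC(u,v) = ∫₀¹∫₀¹ C(u,v) g′(u) h′(v) du dv − g(1) h(1). -/
open MeasureTheory Set

noncomputable section

namespace Stmt9Aux

instance unif_finite : IsFiniteMeasure unif := ⟨by simp [unif, Real.volume_Icc]⟩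

lemma meas_ind {f : ℝ → ℝ} (hf : ContinuousOn f (Ioo (0:ℝ) 1)) :
    Measurable ((Ioo (0:ℝ) 1).indicator f) := by
  classical
  have := ContinuousOn.measurable_piecewise (g := fun _ => (0:ℝ))
    hf continuousOn_const measurableSet_Ioo
  convert this using 1
  ext x
  by_cases hx : x ∈ Ioo (0:ℝ) 1 <;> simp [hx, Set.piecewise]

lemma ftc {g g' : ℝ → ℝ} (hgc : ContinuousOn g (Icc 0 1))
    (hgd : ∀ x ∈ Ioo (0:ℝ) 1, HasDerivAt g (g' x) x)
    (hgi : IntegrableOn g' (Icc (0:ℝ) 1) volume)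
    {u : ℝ} (hu : u ∈ Icc (0:ℝ) 1) :
    ∫ s in Icc (0:ℝ) 1, (if u ≤ s then g' s else 0) = g 1 - g u := by
  have h1 : (fun s => if u ≤ s then g' s else 0) = (Ici u).indicator g' := by
    ext s; simp [Set.indicator, Set.mem_Ici]
  rw [h1, integral_indicator measurableSet_Ici, Measure.restrict_restrict measurableSet_Ici]
  have h2 : Ici u ∩ Icc (0:ℝ) 1 = Icc u 1 := by
    ext s
    simp only [Set.mem_inter_iff, Set.mem_Ici, Set.mem_Icc]
    exact ⟨fun hs => ⟨hs.1, hs.2.2⟩, fun hs => ⟨hs.1, hu.1.trans hs.1, hs.2⟩⟩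
  rw [h2, MeasureTheory.integral_Icc_eq_integral_Ioc, ← intervalIntegral.integral_of_le hu.2]
  exact intervalIntegral.integral_eq_sub_of_hasDeriv_right_of_le hu.2
    (hgc.mono (Icc_subset_Icc hu.1 le_rfl))
    (fun x hx => (hgd x ⟨lt_of_le_of_lt hu.1 hx.1, hx.2⟩).hasDerivWithinAt)
    ((intervalIntegrable_iff_integrableOn_Ioc_of_le hu.2).2
      (hgi.mono_set (fun x hx => ⟨hu.1.trans hx.1.le, hx.2⟩)))

end Stmt9Aux

namespace Stmt9Aux

lemma mem_ae {Ω : Type*} [MeasurableSpace Ω] (P : Measure Ω) [IsProbabilityMeasure P]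
    (W : Ω → ℝ) (hW : Measurable W) (hWu : Measure.map W P = unif) :
    ∀ᵐ ω ∂P, W ω ∈ Icc (0:ℝ) 1 := by
  have h0 : P (W ⁻¹' (Icc (0:ℝ) 1)ᶜ) = 0 := by
    rw [← Measure.map_apply hW measurableSet_Icc.compl, hWu, unif,
      Measure.restrict_apply measurableSet_Icc.compl]
    simp
  rw [ae_iff]
  simpa [Set.preimage, Set.compl_def] using h0

theorem key {Ω : Type*} [MeasurableSpace Ω] (P : Measure Ω) [IsProbabilityMeasure P]
    (U V : Ω → ℝ) (hU : Measurable U) (hV : Measurable V)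
    (hUu : Measure.map U P = unif) (hVu : Measure.map V P = unif)
    (g h g' h' : ℝ → ℝ) (hg : Continuous g) (hh : Continuous h)
    (hg' : Measurable g') (hh' : Measurable h')
    {Kg Kh Mg Mh : ℝ}
    (hgB : ∀ x, |g x| ≤ Kg) (hhB : ∀ x, |h x| ≤ Kh)
    (hgb : ∀ x, |g' x| ≤ Mg) (hhb : ∀ x, |h' x| ≤ Mh)
    (hgd : ∀ x ∈ Ioo (0:ℝ) 1, HasDerivAt g (g' x) x)
    (hhd : ∀ x ∈ Ioo (0:ℝ) 1, HasDerivAt h (h' x) x)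
    (hg0 : ∫ u in Icc (0:ℝ) 1, g u = 0) (hh0 : ∫ u in Icc (0:ℝ) 1, h u = 0) :
    ∫ ω, g (U ω) * h (V ω) ∂P =
      (∫ u in Icc (0:ℝ) 1, ∫ v in Icc (0:ℝ) 1,
        (P {ω | U ω ≤ u ∧ V ω ≤ v}).toReal * g' u * h' v) - g 1 * h 1 := by
  haveI hfin : IsFiniteMeasure (volume.restrict (Icc (0:ℝ) 1)) := ⟨by simp [Real.volume_Icc]⟩
  have hMg0 : (0:ℝ) ≤ Mg := le_trans (abs_nonneg _) (hgb 0)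
  have hMh0 : (0:ℝ) ≤ Mh := le_trans (abs_nonneg _) (hhb 0)
  have hKg0 : (0:ℝ) ≤ Kg := le_trans (abs_nonneg _) (hgB 0)
  have hKh0 : (0:ℝ) ≤ Kh := le_trans (abs_nonneg _) (hhB 0)
  have hUmem := mem_ae P U hU hUu
  have hVmem := mem_ae P V hV hVu
  have hg'i : IntegrableOn g' (Icc (0:ℝ) 1) volume :=
    ⟨hg'.aestronglyMeasurable, HasFiniteIntegral.of_bounded (C := Mg)
      (ae_of_all _ fun x => by simpa [Real.norm_eq_abs] using hgb x)⟩
  have hh'i : IntegrableOn h' (Icc (0:ℝ) 1) volume :=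
    ⟨hh'.aestronglyMeasurable, HasFiniteIntegral.of_bounded (C := Mh)
      (ae_of_all _ fun x => by simpa [Real.norm_eq_abs] using hhb x)⟩
  have hgrep : ∀ u ∈ Icc (0:ℝ) 1,
      ∫ s in Icc (0:ℝ) 1, (if u ≤ s then g' s else 0) = g 1 - g u :=
    fun u hu => ftc hg.continuousOn hgd hg'i hu
  have hhrep : ∀ u ∈ Icc (0:ℝ) 1,
      ∫ s in Icc (0:ℝ) 1, (if u ≤ s then h' s else 0) = h 1 - h u :=
    fun u hu => ftc hh.continuousOn hhd hh'i hu
  -- inner Fubini step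
  have inner_eq : ∀ s : ℝ, ∫ ω, (if U ω ≤ s then (1:ℝ) else 0) * (h 1 - h (V ω)) ∂P
      = ∫ t in Icc (0:ℝ) 1, (P {ω | U ω ≤ s ∧ V ω ≤ t}).toReal * h' t := by
    intro s
    have step1 : ∫ ω, (if U ω ≤ s then (1:ℝ) else 0) * (h 1 - h (V ω)) ∂P
        = ∫ ω, (∫ t in Icc (0:ℝ) 1,
            (if U ω ≤ s then (1:ℝ) else 0) * (if V ω ≤ t then h' t else 0)) ∂P := by
      refine integral_congr_ae ?_
      filter_upwards [hVmem] with ω hω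
      rw [integral_const_mul, hhrep (V ω) hω]
    have swap1 : ∫ ω, (∫ t in Icc (0:ℝ) 1,
            (if U ω ≤ s then (1:ℝ) else 0) * (if V ω ≤ t then h' t else 0)) ∂P
        = ∫ t in Icc (0:ℝ) 1, ∫ ω,
            (if U ω ≤ s then (1:ℝ) else 0) * (if V ω ≤ t then h' t else 0) ∂P := by
      apply integral_integral_swap
      constructor
      · apply Measurable.aestronglyMeasurable
        apply Measurable.mul
        · exact (Measurable.ite (measurableSet_le hU measurable_const)
            measurable_const measurable_const).comp measurable_fst
        · exact Measurable.ite (measurableSet_le (hV.comp measurable_fst) measurable_snd)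
            (hh'.comp measurable_snd) measurable_const
      · refine HasFiniteIntegral.of_bounded (C := Mh) (ae_of_all _ fun p => ?_)
        obtain ⟨ω, t⟩ := p
        simp only [Function.uncurry_apply_pair, Real.norm_eq_abs, abs_mul]
        have h1 : |if U ω ≤ s then (1:ℝ) else 0| ≤ 1 := by
          split <;> simp
        have h2 : |if V ω ≤ t then h' t else 0| ≤ Mh := by
          split
          · exact hhb _
          · simpa using hMh0
        calc |if U ω ≤ s then (1:ℝ) else 0| * |if V ω ≤ t then h' t else 0|
            ≤ 1 * Mh := mul_le_mul h1 h2 (abs_nonneg _) zero_le_one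
          _ = Mh := one_mul _
    have point : ∀ t : ℝ, ∫ ω,
        (if U ω ≤ s then (1:ℝ) else 0) * (if V ω ≤ t then h' t else 0) ∂P
        = (P {ω | U ω ≤ s ∧ V ω ≤ t}).toReal * h' t := by
      intro t
      have e : ∀ ω, (if U ω ≤ s then (1:ℝ) else 0) * (if V ω ≤ t then h' t else 0)
          = ({ω | U ω ≤ s ∧ V ω ≤ t}).indicator (fun _ => h' t) ω := by
        intro ω
        by_cases h1 : U ω ≤ s <;> by_cases h2 : V ω ≤ t <;>
          simp [Set.indicator, h1, h2]
      have hms : MeasurableSet {ω | U ω ≤ s ∧ V ω ≤ t} := by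
        rw [Set.setOf_and]
        exact (measurableSet_le hU measurable_const).inter
          (measurableSet_le hV measurable_const)
      simp_rw [e]
      rw [integral_indicator_const (h' t) hms, smul_eq_mul]
      rfl
    rw [step1, swap1]
    exact integral_congr_ae (ae_of_all _ fun t => point t)
  have outer : ∫ ω, (g 1 - g (U ω)) * (h 1 - h (V ω)) ∂P
      = ∫ u in Icc (0:ℝ) 1, ∫ v in Icc (0:ℝ) 1,
          (P {ω | U ω ≤ u ∧ V ω ≤ v}).toReal * g' u * h' v := by
    have step1 : ∫ ω, (g 1 - g (U ω)) * (h 1 - h (V ω)) ∂P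
        = ∫ ω, (∫ s in Icc (0:ℝ) 1, (if U ω ≤ s then g' s else 0) * (h 1 - h (V ω))) ∂P := by
      refine integral_congr_ae ?_
      filter_upwards [hUmem] with ω hω
      rw [integral_mul_const, hgrep (U ω) hω]
    have swap1 : ∫ ω, (∫ s in Icc (0:ℝ) 1, (if U ω ≤ s then g' s else 0) * (h 1 - h (V ω))) ∂P
        = ∫ s in Icc (0:ℝ) 1, ∫ ω, (if U ω ≤ s then g' s else 0) * (h 1 - h (V ω)) ∂P := by
      apply integral_integral_swap
      constructor
      · apply Measurable.aestronglyMeasurable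
        apply Measurable.mul
        · exact Measurable.ite (measurableSet_le (hU.comp measurable_fst) measurable_snd)
            (hg'.comp measurable_snd) measurable_const
        · exact measurable_const.sub ((hh.measurable.comp hV).comp measurable_fst)
      · refine HasFiniteIntegral.of_bounded (C := Mg * (2 * Kh)) (ae_of_all _ fun p => ?_)
        obtain ⟨ω, s⟩ := p
        simp only [Function.uncurry_apply_pair, Real.norm_eq_abs, abs_mul]
        have h1 : |if U ω ≤ s then g' s else 0| ≤ Mg := by
          split
          · exact hgb _
          · simpa using hMg0
        have h2 : |h 1 - h (V ω)| ≤ 2 * Kh := by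
          calc |h 1 - h (V ω)| ≤ |h 1| + |h (V ω)| := abs_sub _ _
            _ ≤ Kh + Kh := add_le_add (hhB _) (hhB _)
            _ = 2 * Kh := by ring
        exact mul_le_mul h1 h2 (abs_nonneg _) hMg0
    have point : ∀ s : ℝ, ∫ ω, (if U ω ≤ s then g' s else 0) * (h 1 - h (V ω)) ∂P
        = g' s * ∫ t in Icc (0:ℝ) 1, (P {ω | U ω ≤ s ∧ V ω ≤ t}).toReal * h' t := by
      intro s
      have e : ∀ ω, (if U ω ≤ s then g' s else 0) * (h 1 - h (V ω))
          = g' s * ((if U ω ≤ s then (1:ℝ) else 0) * (h 1 - h (V ω))) := by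
        intro ω; by_cases h1 : U ω ≤ s <;> simp [h1]
      simp_rw [e]
      rw [integral_const_mul, inner_eq s]
    rw [step1, swap1]
    refine integral_congr_ae (ae_of_all _ fun s => ?_)
    dsimp only
    rw [point s, ← integral_const_mul]
    exact integral_congr_ae (ae_of_all _ fun t => by ring)
  have hgU_meas : Measurable fun ω => g (U ω) := hg.measurable.comp hU
  have hhV_meas : Measurable fun ω => h (V ω) := hh.measurable.comp hV
  have hgU_int : Integrable (fun ω => g (U ω)) P :=
    ⟨hgU_meas.aestronglyMeasurable, HasFiniteIntegral.of_bounded (C := Kg)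
      (ae_of_all _ fun ω => by simpa [Real.norm_eq_abs] using hgB (U ω))⟩
  have hhV_int : Integrable (fun ω => h (V ω)) P :=
    ⟨hhV_meas.aestronglyMeasurable, HasFiniteIntegral.of_bounded (C := Kh)
      (ae_of_all _ fun ω => by simpa [Real.norm_eq_abs] using hhB (V ω))⟩
  have hgh_int : Integrable (fun ω => g (U ω) * h (V ω)) P :=
    ⟨(hgU_meas.mul hhV_meas).aestronglyMeasurable, HasFiniteIntegral.of_bounded (C := Kg * Kh)
      (ae_of_all _ fun ω => by
        rw [Real.norm_eq_abs, abs_mul]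
        exact mul_le_mul (hgB _) (hhB _) (abs_nonneg _) hKg0)⟩
  have hintU : ∫ ω, g (U ω) ∂P = 0 := by
    rw [← integral_map hU.aemeasurable hg.aestronglyMeasurable, hUu]
    simpa [unif] using hg0
  have hintV : ∫ ω, h (V ω) ∂P = 0 := by
    rw [← integral_map hV.aemeasurable hh.aestronglyMeasurable, hVu]
    simpa [unif] using hh0
  have expand : ∫ ω, (g 1 - g (U ω)) * (h 1 - h (V ω)) ∂P
      = g 1 * h 1 + ∫ ω, g (U ω) * h (V ω) ∂P := by
    have e : ∀ ω : Ω, (g 1 - g (U ω)) * (h 1 - h (V ω))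
        = g (U ω) * h (V ω) + (g 1 * h 1 - g 1 * h (V ω) - h 1 * g (U ω)) := fun ω => by ring
    simp_rw [e]
    have i3 : Integrable (fun ω => g 1 * h (V ω)) P := hhV_int.const_mul _
    have i4 : Integrable (fun ω => h 1 * g (U ω)) P := hgU_int.const_mul _
    have i2 : Integrable (fun ω => g 1 * h 1 - g 1 * h (V ω) - h 1 * g (U ω)) P :=
      ((integrable_const _).sub i3).sub i4
    have i5 : Integrable (fun ω => g 1 * h 1 - g 1 * h (V ω)) P := (integrable_const _).sub i3
    have i6 : Integrable (fun _ : Ω => g 1 * h 1) P := integrable_const _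
    rw [integral_add hgh_int i2,
      integral_sub i5 i4,
      integral_sub i6 i3,
      integral_const, integral_const_mul, integral_const_mul, hintU, hintV]
    simp only [probReal_univ, smul_eq_mul, one_mul, mul_zero, sub_zero]
    ring
  rw [← outer, expand]
  ring


end Stmt9Aux

set_option maxHeartbeats 2000000 in
/-- Integration-by-parts formula for generalized Spearman correlation: if `(U,V)` has
copula `C` (uniform margins), `g, h` are continuous on `[0,1]`, continuously
differentiable on `(0,1)` with bounded derivatives, and `∫ g = ∫ h = 0`, then
`∫∫ g(u)h(v) dC(u,v) = ∫∫ C(u,v) g'(u) h'(v) du dv − g(1)h(1)`. -/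
theorem stmt9 {Ω : Type*} [MeasurableSpace Ω] (P : Measure Ω) [IsProbabilityMeasure P]
    (U V : Ω → ℝ) (hU : Measurable U) (hV : Measurable V)
    (hUu : Measure.map U P = unif) (hVu : Measure.map V P = unif)
    (g h g' h' : ℝ → ℝ)
    (hgc : ContinuousOn g (Icc (0:ℝ) 1)) (hhc : ContinuousOn h (Icc (0:ℝ) 1))
    (hgd : ∀ x ∈ Ioo (0:ℝ) 1, HasDerivAt g (g' x) x)
    (hhd : ∀ x ∈ Ioo (0:ℝ) 1, HasDerivAt h (h' x) x)
    (hg'c : ContinuousOn g' (Ioo (0:ℝ) 1)) (hh'c : ContinuousOn h' (Ioo (0:ℝ) 1))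
    (hgb : ∃ Mg, ∀ x ∈ Ioo (0:ℝ) 1, |g' x| ≤ Mg)
    (hhb : ∃ Mh, ∀ x ∈ Ioo (0:ℝ) 1, |h' x| ≤ Mh)
    (hg0 : ∫ u in Icc (0:ℝ) 1, g u = 0) (hh0 : ∫ u in Icc (0:ℝ) 1, h u = 0) :
    ∫ ω, g (U ω) * h (V ω) ∂P =
      (∫ u in Icc (0:ℝ) 1, ∫ v in Icc (0:ℝ) 1,
        (P {ω | U ω ≤ u ∧ V ω ≤ v}).toReal * g' u * h' v) - g 1 * h 1 := by
  classical
  obtain ⟨Mg, hgb⟩ := hgb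
  obtain ⟨Mh, hhb⟩ := hhb
  have hcmem : ∀ x : ℝ, min 1 (max 0 x) ∈ Icc (0:ℝ) 1 := fun x =>
    ⟨le_min zero_le_one (le_max_left 0 x), min_le_left _ _⟩
  have hccont : Continuous fun x : ℝ => min 1 (max 0 x) :=
    continuous_const.min (continuous_const.max continuous_id)
  have hcid : ∀ x ∈ Icc (0:ℝ) 1, min 1 (max 0 x) = x := fun x hx => by
    rw [max_eq_right hx.1, min_eq_right hx.2]
  -- clamped versions
  have hGeq : ∀ x ∈ Icc (0:ℝ) 1, g (min 1 (max 0 x)) = g x := fun x hx => by rw [hcid x hx]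
  have hHeq : ∀ x ∈ Icc (0:ℝ) 1, h (min 1 (max 0 x)) = h x := fun x hx => by rw [hcid x hx]
  have hGcont : Continuous fun x => g (min 1 (max 0 x)) :=
    hgc.comp_continuous hccont hcmem
  have hHcont : Continuous fun x => h (min 1 (max 0 x)) :=
    hhc.comp_continuous hccont hcmem
  obtain ⟨Kg, hKg⟩ := isCompact_Icc.exists_bound_of_continuousOn hgc
  obtain ⟨Kh, hKh⟩ := isCompact_Icc.exists_bound_of_continuousOn hhc
  have hGB : ∀ x, |g (min 1 (max 0 x))| ≤ Kg := fun x => by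
    simpa [Real.norm_eq_abs] using hKg _ (hcmem x)
  have hHB : ∀ x, |h (min 1 (max 0 x))| ≤ Kh := fun x => by
    simpa [Real.norm_eq_abs] using hKh _ (hcmem x)
  have hG'meas : Measurable ((Ioo (0:ℝ) 1).indicator g') := Stmt9Aux.meas_ind hg'c
  have hH'meas : Measurable ((Ioo (0:ℝ) 1).indicator h') := Stmt9Aux.meas_ind hh'c
  have hG'b : ∀ x, |(Ioo (0:ℝ) 1).indicator g' x| ≤ max Mg 0 := fun x => by
    by_cases hx : x ∈ Ioo (0:ℝ) 1
    · rw [Set.indicator_of_mem hx]; exact le_max_of_le_left (hgb x hx)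
    · rw [Set.indicator_of_notMem hx]; simpa using le_max_right Mg 0
  have hH'b : ∀ x, |(Ioo (0:ℝ) 1).indicator h' x| ≤ max Mh 0 := fun x => by
    by_cases hx : x ∈ Ioo (0:ℝ) 1
    · rw [Set.indicator_of_mem hx]; exact le_max_of_le_left (hhb x hx)
    · rw [Set.indicator_of_notMem hx]; simpa using le_max_right Mh 0
  have hGd : ∀ x ∈ Ioo (0:ℝ) 1,
      HasDerivAt (fun x => g (min 1 (max 0 x))) ((Ioo (0:ℝ) 1).indicator g' x) x := by
    intro x hx
    rw [Set.indicator_of_mem hx]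
    refine (hgd x hx).congr_of_eventuallyEq ?_
    filter_upwards [isOpen_Ioo.mem_nhds hx] with y hy
    exact hGeq y (Ioo_subset_Icc_self hy)
  have hHd : ∀ x ∈ Ioo (0:ℝ) 1,
      HasDerivAt (fun x => h (min 1 (max 0 x))) ((Ioo (0:ℝ) 1).indicator h' x) x := by
    intro x hx
    rw [Set.indicator_of_mem hx]
    refine (hhd x hx).congr_of_eventuallyEq ?_
    filter_upwards [isOpen_Ioo.mem_nhds hx] with y hy
    exact hHeq y (Ioo_subset_Icc_self hy)
  have hG0 : ∫ u in Icc (0:ℝ) 1, g (min 1 (max 0 u)) = 0 := by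
    have e : ∫ u in Icc (0:ℝ) 1, g (min 1 (max 0 u)) = ∫ u in Icc (0:ℝ) 1, g u :=
      setIntegral_congr_fun measurableSet_Icc fun x hx => hGeq x hx
    rw [e, hg0]
  have hH0 : ∫ u in Icc (0:ℝ) 1, h (min 1 (max 0 u)) = 0 := by
    have e : ∫ u in Icc (0:ℝ) 1, h (min 1 (max 0 u)) = ∫ u in Icc (0:ℝ) 1, h u :=
      setIntegral_congr_fun measurableSet_Icc fun x hx => hHeq x hx
    rw [e, hh0]
  have key := Stmt9Aux.key P U V hU hV hUu hVu
    (fun x => g (min 1 (max 0 x))) (fun x => h (min 1 (max 0 x)))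
    ((Ioo (0:ℝ) 1).indicator g') ((Ioo (0:ℝ) 1).indicator h')
    hGcont hHcont hG'meas hH'meas hGB hHB hG'b hH'b hGd hHd hG0 hH0
  have hUmem := Stmt9Aux.mem_ae P U hU hUu
  have hVmem := Stmt9Aux.mem_ae P V hV hVu
  have lhs_eq : ∫ ω, g (U ω) * h (V ω) ∂P
      = ∫ ω, g (min 1 (max 0 (U ω))) * h (min 1 (max 0 (V ω))) ∂P := by
    refine integral_congr_ae ?_
    filter_upwards [hUmem, hVmem] with ω h1 h2
    rw [hGeq _ h1, hHeq _ h2]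
  have hnull : (volume.restrict (Icc (0:ℝ) 1)) ((Ioo (0:ℝ) 1)ᶜ) = 0 := by
    rw [Measure.restrict_apply measurableSet_Ioo.compl]
    refine measure_mono_null (fun x hx => ?_) (?_ : volume ({0,1} : Set ℝ) = 0)
    · obtain ⟨hx1, hx2⟩ := hx
      rcases eq_or_lt_of_le hx2.1 with h0 | h0
      · exact Or.inl h0.symm
      · right
        by_contra hne
        exact hx1 ⟨h0, lt_of_le_of_ne hx2.2 hne⟩
    · exact ((Set.finite_singleton (1:ℝ)).insert 0).measure_zero _
  have hG'ae : (Ioo (0:ℝ) 1).indicator g' =ᵐ[volume.restrict (Icc (0:ℝ) 1)] g' := by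
    rw [Filter.EventuallyEq, ae_iff]
    refine measure_mono_null (fun x hx => ?_) hnull
    intro hmem
    exact hx (Set.indicator_of_mem hmem g')
  have hH'ae : (Ioo (0:ℝ) 1).indicator h' =ᵐ[volume.restrict (Icc (0:ℝ) 1)] h' := by
    rw [Filter.EventuallyEq, ae_iff]
    refine measure_mono_null (fun x hx => ?_) hnull
    intro hmem
    exact hx (Set.indicator_of_mem hmem h')
  have rhs_eq : (∫ u in Icc (0:ℝ) 1, ∫ v in Icc (0:ℝ) 1,
        (P {ω | U ω ≤ u ∧ V ω ≤ v}).toReal * (Ioo (0:ℝ) 1).indicator g' u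
          * (Ioo (0:ℝ) 1).indicator h' v)
      = ∫ u in Icc (0:ℝ) 1, ∫ v in Icc (0:ℝ) 1,
        (P {ω | U ω ≤ u ∧ V ω ≤ v}).toReal * g' u * h' v := by
    refine integral_congr_ae ?_
    filter_upwards [hG'ae] with u hu
    refine integral_congr_ae ?_
    filter_upwards [hH'ae] with v hv
    rw [hu, hv]
  have hg1 : g (min 1 (max 0 (1:ℝ))) = g 1 := hGeq 1 ⟨zero_le_one, le_rfl⟩
  have hh1 : h (min 1 (max 0 (1:ℝ))) = h 1 := hHeq 1 ⟨zero_le_one, le_rfl⟩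
  rw [lhs_eq, key, rhs_eq]
  beta_reduce
  rw [hg1, hh1]

end
end

section
/- Let (U,V) be a pair of Uniform(0,1) random variables, {B_j} a correlation basis, and for N ∈ ℕ let P_N be the N×N matrix with entries (P_N)_{jk} = E(B_j(U) B_k(V)), j,k ∈ {1,…,N}. Then the symmetric matrices I_N + (P_N + P_Nᵀ)/2 and I_N − (P_N + P_Nᵀ)/2 are positive semi-definite. -/
open MeasureTheory Set

noncomputable section

/-- `B` is an orthonormal system in `L²([0,1])`. -/
def OrthonormalSystem (B : ℕ → ℝ → ℝ) : Prop :=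
  ∀ j k, ∫ u in Icc (0:ℝ) 1, B j u * B k u = if j = k then 1 else 0

open Matrix

lemma my_int_mul {α : Type*} [MeasurableSpace α] {μ : Measure α} {f g : α → ℝ}
    (hf : MemLp f 2 μ) (hg : MemLp g 2 μ) : Integrable (fun x => f x * g x) μ := by
  have h : MemLp (g • f) 1 μ := hf.smul hg
  rw [memLp_one_iff_integrable] at h
  have h' : Integrable (f * g) μ := by simpa [Pi.smul_apply, smul_eq_mul, mul_comm] using h
  exact h'

/-- For a pair `(U,V)` of uniform random variables and a correlation basis `B`,
the matrices `I_N ± (P_N + P_Nᵀ)/2` are positive semi-definite, where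
`(P_N)_{jk} = E(B_j(U) B_k(V))`. -/
theorem stmt12 {Ω : Type*} [MeasurableSpace Ω] (P : Measure Ω) [IsProbabilityMeasure P]
    (U V : Ω → ℝ) (hU : Measurable U) (hV : Measurable V)
    (hUu : Measure.map U P = unif) (hVu : Measure.map V P = unif)
    (B : ℕ → ℝ → ℝ) (hBmeas : ∀ j, Measurable (B j))
    (hB2 : ∀ j, MemLp (B j) 2 unif) (hB0 : ∀ u, B 0 u = 1)
    (hON : OrthonormalSystem B) (N : ℕ)
    (Pmat : Matrix (Fin N) (Fin N) ℝ)
    (hPmat : ∀ j k : Fin N,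
      Pmat j k = ∫ ω, B ((j : ℕ)+1) (U ω) * B ((k : ℕ)+1) (V ω) ∂P) :
    ((1 : Matrix (Fin N) (Fin N) ℝ) + (2:ℝ)⁻¹ • (Pmat + Pmat.transpose)).PosSemidef ∧
    ((1 : Matrix (Fin N) (Fin N) ℝ) - (2:ℝ)⁻¹ • (Pmat + Pmat.transpose)).PosSemidef := by
  classical
  have hBU : ∀ m, MemLp (fun ω => B m (U ω)) 2 P := fun m =>
    (show MemLp (B m) 2 (Measure.map U P) from hUu ▸ hB2 m).comp_of_map hU.aemeasurable
  have hBV : ∀ m, MemLp (fun ω => B m (V ω)) 2 P := fun m =>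
    (show MemLp (B m) 2 (Measure.map V P) from hVu ▸ hB2 m).comp_of_map hV.aemeasurable
  have key : ∀ (x : Fin N → ℝ) (ε : ℝ), ε = 1 ∨ ε = -1 →
      0 ≤ (∑ j, x j * x j) + ε * (x ⬝ᵥ Pmat *ᵥ x) := by
    intro x ε hε
    set f : ℝ → ℝ := fun u => ∑ j : Fin N, x j * B ((j:ℕ)+1) u with hf
    have hfmeas : Measurable f := by
      rw [hf]
      exact Finset.measurable_sum _ (fun j _ => (hBmeas _).const_mul _)
    have hf2 : MemLp f 2 unif := by
      rw [hf]
      exact memLp_finset_sum _ (fun j _ => (hB2 _).const_mul _)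
    have hfU : MemLp (fun ω => f (U ω)) 2 P :=
      (show MemLp f 2 (Measure.map U P) from hUu ▸ hf2).comp_of_map hU.aemeasurable
    have hfV : MemLp (fun ω => f (V ω)) 2 P :=
      (show MemLp f 2 (Measure.map V P) from hVu ▸ hf2).comp_of_map hV.aemeasurable
    have hint : ∀ m n : ℕ, Integrable (fun ω => B m (U ω) * B n (V ω)) P :=
      fun m n => my_int_mul (hBU m) (hBV n)
    have hterm : ∀ j k : Fin N,
        Integrable (fun ω => x j * (x k * (B ((j:ℕ)+1) (U ω) * B ((k:ℕ)+1) (V ω)))) P :=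
      fun j k => ((hint _ _).const_mul (x k)).const_mul (x j)
    have hq : x ⬝ᵥ Pmat *ᵥ x = ∫ ω, f (U ω) * f (V ω) ∂P := by
      have hpt : ∀ ω, f (U ω) * f (V ω)
          = ∑ j : Fin N, ∑ k : Fin N,
              x j * (x k * (B ((j:ℕ)+1) (U ω) * B ((k:ℕ)+1) (V ω))) := by
        intro ω
        rw [hf, Finset.sum_mul_sum]
        exact Finset.sum_congr rfl fun j _ => Finset.sum_congr rfl fun k _ => by ring
      rw [integral_congr_ae (ae_of_all _ hpt),
        integral_finset_sum _ (fun j _ => integrable_finset_sum _ (fun k _ => hterm j k))]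
      simp only [dotProduct, Matrix.mulVec, dotProduct]
      refine Finset.sum_congr rfl (fun j _ => ?_)
      rw [integral_finset_sum _ (fun k _ => hterm j k), Finset.mul_sum]
      refine Finset.sum_congr rfl (fun k _ => ?_)
      rw [integral_const_mul, integral_const_mul, hPmat]
      ring
    have hONu : ∀ m n : ℕ, ∫ u, B m u * B n u ∂unif = if m = n then 1 else 0 := hON
    have hintu : ∀ m n : ℕ, Integrable (fun u => B m u * B n u) unif :=
      fun m n => my_int_mul (hB2 m) (hB2 n)
    have htermu : ∀ j k : Fin N,
        Integrable (fun u => x j * (x k * (B ((j:ℕ)+1) u * B ((k:ℕ)+1) u))) unif :=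
      fun j k => ((hintu _ _).const_mul (x k)).const_mul (x j)
    have hfsq : ∫ u, f u * f u ∂unif = ∑ j, x j * x j := by
      have hpt : ∀ u, f u * f u
          = ∑ j : Fin N, ∑ k : Fin N,
              x j * (x k * (B ((j:ℕ)+1) u * B ((k:ℕ)+1) u)) := by
        intro u
        rw [hf, Finset.sum_mul_sum]
        exact Finset.sum_congr rfl fun j _ => Finset.sum_congr rfl fun k _ => by ring
      rw [integral_congr_ae (ae_of_all _ hpt),
        integral_finset_sum _ (fun j _ => integrable_finset_sum _ (fun k _ => htermu j k))]
      refine Finset.sum_congr rfl (fun j _ => ?_)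
      rw [integral_finset_sum _ (fun k _ => htermu j k)]
      rw [Finset.sum_eq_single j]
      · rw [integral_const_mul, integral_const_mul, hONu]
        simp
      · intro k _ hkj
        rw [integral_const_mul, integral_const_mul, hONu]
        have hne : ¬((j:ℕ)+1 = (k:ℕ)+1) := by
          simp only [add_left_inj]
          exact fun h => hkj (Fin.ext h).symm
        simp [hne]
        exact fun h => absurd (Fin.ext h) hkj.symm
      · intro h; exact absurd (Finset.mem_univ j) h
    have hmU : ∫ ω, f (U ω) * f (U ω) ∂P = ∑ j, x j * x j := by
      rw [← hfsq, ← hUu]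
      exact (integral_map hU.aemeasurable ((hfmeas.mul hfmeas).aestronglyMeasurable)).symm
    have hmV : ∫ ω, f (V ω) * f (V ω) ∂P = ∑ j, x j * x j := by
      rw [← hfsq, ← hVu]
      exact (integral_map hV.aemeasurable ((hfmeas.mul hfmeas).aestronglyMeasurable)).symm
    have hI1 : Integrable (fun ω => f (U ω) * f (U ω)) P := my_int_mul hfU hfU
    have hI2 : Integrable (fun ω => ε * ε * (f (V ω) * f (V ω))) P :=
      (my_int_mul hfV hfV).const_mul _
    have hI3 : Integrable (fun ω => 2 * ε * (f (U ω) * f (V ω))) P :=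
      (my_int_mul hfU hfV).const_mul _
    have hI12 : Integrable (fun ω => f (U ω) * f (U ω) + ε * ε * (f (V ω) * f (V ω))) P :=
      hI1.add hI2
    have hsq : 0 ≤ ∫ ω, (f (U ω) * f (U ω) + ε * ε * (f (V ω) * f (V ω))
        + 2 * ε * (f (U ω) * f (V ω))) ∂P := by
      refine integral_nonneg (fun ω => ?_)
      have h2 : ε * ε = 1 := by rcases hε with h | h <;> simp [h]
      have : f (U ω) * f (U ω) + ε * ε * (f (V ω) * f (V ω)) + 2 * ε * (f (U ω) * f (V ω))
          = (f (U ω) + ε * f (V ω)) * (f (U ω) + ε * f (V ω)) := by ring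
      rw [this]
      exact mul_self_nonneg _
    rw [integral_add hI12 hI3, integral_add hI1 hI2, integral_const_mul, integral_const_mul,
      hmU, hmV] at hsq
    have hε2 : ε * ε = 1 := by rcases hε with h | h <;> simp [h]
    rw [hε2, one_mul] at hsq
    rw [hq]
    set s := ∑ j, x j * x j
    set q := ∫ ω, f (U ω) * f (V ω) ∂P
    nlinarith [hsq]
  -- Hermitian parts
  have hherm : ((2:ℝ)⁻¹ • (Pmat + Pmat.transpose)).IsHermitian := by
    rw [Matrix.IsHermitian, Matrix.conjTranspose_eq_transpose_of_trivial,
      Matrix.transpose_smul, Matrix.transpose_add, Matrix.transpose_transpose,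
      add_comm Pmat.transpose]
  have hquad : ∀ x : Fin N → ℝ,
      x ⬝ᵥ ((2:ℝ)⁻¹ • (Pmat + Pmat.transpose)) *ᵥ x = x ⬝ᵥ Pmat *ᵥ x := by
    intro x
    have h1 : x ⬝ᵥ Matrix.vecMul x Pmat = x ⬝ᵥ Pmat *ᵥ x := by
      rw [dotProduct_comm, ← dotProduct_mulVec]
    rw [Matrix.smul_mulVec, dotProduct_smul, Matrix.add_mulVec,
      dotProduct_add, Matrix.mulVec_transpose, h1, smul_eq_mul]
    ring
  have hdot : ∀ x : Fin N → ℝ, x ⬝ᵥ x = ∑ j, x j * x j := fun x => rfl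
  constructor
  · refine Matrix.posSemidef_iff_dotProduct_mulVec.2 ⟨Matrix.isHermitian_one.add hherm, fun x => ?_⟩
    have hk := key x 1 (Or.inl rfl)
    rw [star_trivial, Matrix.add_mulVec, dotProduct_add, Matrix.one_mulVec,
      hquad, hdot]
    linarith
  · refine Matrix.posSemidef_iff_dotProduct_mulVec.2 ⟨Matrix.isHermitian_one.sub hherm, fun x => ?_⟩
    have hk := key x (-1) (Or.inr rfl)
    rw [star_trivial, Matrix.sub_mulVec, dotProduct_sub, Matrix.one_mulVec,
      hquad, hdot]
    linarith
end
end
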